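/- arXiv:1801.02696 — 3 statements merged into one kernel-verified Lean document; each statement's English description precedes it below -/
import Mathlib

section
/- The generating function of chord diagrams by crossings evaluated at η = -1 equals 1: Σ_i (-1)^{E_i} = 1, summing over all (2p-1)!! chord diagrams with p chords, with E_i the crossing number. -/
open Finset

/-- A chord diagram on `n` points: a fixed-point-free involution of `Fin n`. -/
def IsChordDiagram {n : ℕ} (σ : Equiv.Perm (Fin n)) : Prop :=
  (∀ x, σ (σ x) = x) ∧ ∀ x, σ x ≠ x

instance {n : ℕ} (σ : Equiv.Perm (Fin n)) : Decidable (IsChordDiagram σ) := by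
  unfold IsChordDiagram; infer_instance

/-- The finset of all chord diagrams with `p` chords (on `2p` points). -/
def chordDiagrams (p : ℕ) : Finset (Equiv.Perm (Fin (2 * p))) :=
  Finset.univ.filter IsChordDiagram

/-- Two chords, identified by their left endpoints `a`, `b`, cross. -/
def Cross {n : ℕ} (σ : Equiv.Perm (Fin n)) (a b : Fin n) : Prop :=
  (a < b ∧ b < σ a ∧ σ a < σ b) ∨ (b < a ∧ a < σ b ∧ σ b < σ a)

instance {n : ℕ} (σ : Equiv.Perm (Fin n)) (a b : Fin n) : Decidable (Cross σ a b) := by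
  unfold Cross; infer_instance

/-- The number of crossings of a chord diagram. -/
def crossNum {n : ℕ} (σ : Equiv.Perm (Fin n)) : ℕ :=
  (Finset.univ.filter (fun q : Fin n × Fin n =>
    q.1 < σ q.1 ∧ q.2 < σ q.2 ∧ q.1 < q.2 ∧ Cross σ q.1 q.2)).card

/-- The number of triangles of the intersection graph of a chord diagram:
unordered triples of chords which pairwise cross. -/
def triNum {n : ℕ} (σ : Equiv.Perm (Fin n)) : ℕ :=
  (Finset.univ.filter (fun t : Fin n × Fin n × Fin n =>
    t.1 < σ t.1 ∧ t.2.1 < σ t.2.1 ∧ t.2.2 < σ t.2.2 ∧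
    t.1 < t.2.1 ∧ t.2.1 < t.2.2 ∧
    Cross σ t.1 t.2.1 ∧ Cross σ t.2.1 t.2.2 ∧ Cross σ t.1 t.2.2)).card

lemma swap_val {n : ℕ} (z o x : Fin n) (hz : (z : ℕ) = 0) (ho : (o : ℕ) = 1) :
    ((Equiv.swap z o) x : ℕ)
      = if (x : ℕ) = 0 then 1 else if (x : ℕ) = 1 then 0 else (x : ℕ) := by
  rw [Equiv.swap_apply_def]
  split_ifs with h1 h2 h3 h4 h5 <;> simp_all [Fin.ext_iff]

lemma neg_one_pow_sum {m k : ℕ} (h : (m + k) % 2 = 1) : (-1 : ℤ) ^ m + (-1 : ℤ) ^ k = 0 := by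
  rcases Nat.even_or_odd m with hm | hm
  · have hk : Odd k := by
      rcases hm with ⟨x, hx⟩; exact ⟨(k - 1) / 2, by omega⟩
    rw [Even.neg_one_pow hm, Odd.neg_one_pow hk]; ring
  · have hk : Even k := by
      rcases hm with ⟨x, hx⟩; exact ⟨k / 2, by omega⟩
    rw [Odd.neg_one_pow hm, Even.neg_one_pow hk]; ring

lemma flip_pair {n : ℕ} (z o : Fin n) (hz : (z : ℕ) = 0) (ho : (o : ℕ) = 1)
    (σ : Equiv.Perm (Fin n)) (a b : Fin n)
    (h : a < σ a ∧ b < σ b ∧ a < b ∧ Cross σ a b)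
    (hne : ¬((a : ℕ) = 0 ∧ (b : ℕ) = 1)) :
    (Equiv.swap z o a < (Equiv.swap z o * σ * Equiv.swap z o) (Equiv.swap z o a) ∧
      Equiv.swap z o b < (Equiv.swap z o * σ * Equiv.swap z o) (Equiv.swap z o b) ∧
      Equiv.swap z o a < Equiv.swap z o b ∧
      Cross (Equiv.swap z o * σ * Equiv.swap z o) (Equiv.swap z o a) (Equiv.swap z o b)) ∧
    ¬((Equiv.swap z o a : ℕ) = 0 ∧ (Equiv.swap z o b : ℕ) = 1) := by
  have hca : (Equiv.swap z o * σ * Equiv.swap z o) (Equiv.swap z o a) = Equiv.swap z o (σ a) := by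
    simp [Equiv.Perm.mul_apply, Equiv.swap_apply_self]
  have hcb : (Equiv.swap z o * σ * Equiv.swap z o) (Equiv.swap z o b) = Equiv.swap z o (σ b) := by
    simp [Equiv.Perm.mul_apply, Equiv.swap_apply_self]
  obtain ⟨h1, h2, h3, h4⟩ := h
  have hcross : (b : ℕ) < (σ a : ℕ) ∧ (σ a : ℕ) < (σ b : ℕ) := by
    rcases h4 with ⟨_, x1, x2⟩ | ⟨x1, _, _⟩
    · exact ⟨x1, x2⟩
    · exact absurd h3 (not_lt.mpr (le_of_lt x1))
  rw [Fin.lt_def] at h1 h2 h3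
  have va := swap_val z o a hz ho
  have vb := swap_val z o b hz ho
  have vsa := swap_val z o (σ a) hz ho
  have vsb := swap_val z o (σ b) hz ho
  rw [hca, hcb]
  simp only [Cross, Fin.lt_def]
  split_ifs at va vb vsa vsb <;> omega

lemma flip_parity {n : ℕ} (z o : Fin n) (hz : (z : ℕ) = 0) (ho : (o : ℕ) = 1)
    (σ : Equiv.Perm (Fin n)) (hinv : ∀ x, σ (σ x) = x) (hfpf : ∀ x, σ x ≠ x)
    (h01 : σ z ≠ o) :
    (-1 : ℤ) ^ crossNum (Equiv.swap z o * σ * Equiv.swap z o) + (-1 : ℤ) ^ crossNum σ = 0 := by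
  have key : ∀ τ : Equiv.Perm (Fin n), crossNum τ = (Finset.univ.filter
      (fun q : Fin n × Fin n =>
        q.1 < τ q.1 ∧ q.2 < τ q.2 ∧ q.1 < q.2 ∧ Cross τ q.1 q.2)).card := fun _ => rfl
  set σ' := Equiv.swap z o * σ * Equiv.swap z o with hσ'
  have hback : Equiv.swap z o * σ' * Equiv.swap z o = σ := by
    ext x
    simp [hσ', Equiv.Perm.mul_apply, Equiv.swap_apply_self]
  have hσz0 : (σ z : ℕ) ≠ 0 := fun hx => hfpf z (Fin.ext_iff.mpr (by omega))
  have hσz1 : (σ z : ℕ) ≠ 1 := fun hx => h01 (Fin.ext_iff.mpr (by omega))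
  have hσo1 : (σ o : ℕ) ≠ 1 := fun hx => hfpf o (Fin.ext_iff.mpr (by omega))
  have hσo0 : (σ o : ℕ) ≠ 0 := by
    intro hx
    apply h01
    have e : σ o = z := Fin.ext_iff.mpr (by omega)
    rw [← e, hinv]
  have hnezo : (σ z : ℕ) ≠ (σ o : ℕ) := by
    intro hx
    have h' : z = o := σ.injective (Fin.ext_iff.mpr hx)
    have := Fin.ext_iff.mp h'
    omega
  have eσo : Equiv.swap z o (σ o) = σ o :=
    Equiv.swap_apply_of_ne_of_ne (fun e => hσo0 (by rw [e, hz]))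
      (fun e => hσo1 (by rw [e, ho]))
  have eσz : Equiv.swap z o (σ z) = σ z :=
    Equiv.swap_apply_of_ne_of_ne (fun e => hσz0 (by rw [e, hz]))
      (fun e => hσz1 (by rw [e, ho]))
  have e1 : (σ' z : ℕ) = (σ o : ℕ) := by
    rw [hσ', Equiv.Perm.mul_apply, Equiv.Perm.mul_apply, Equiv.swap_apply_left, eσo]
  have e2 : (σ' o : ℕ) = (σ z : ℕ) := by
    rw [hσ', Equiv.Perm.mul_apply, Equiv.Perm.mul_apply, Equiv.swap_apply_right, eσz]
  have hcard : ((Finset.univ.filter (fun q : Fin n × Fin n =>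
        q.1 < σ q.1 ∧ q.2 < σ q.2 ∧ q.1 < q.2 ∧ Cross σ q.1 q.2)).erase (z, o)).card
      = ((Finset.univ.filter (fun q : Fin n × Fin n =>
        q.1 < σ' q.1 ∧ q.2 < σ' q.2 ∧ q.1 < q.2 ∧ Cross σ' q.1 q.2)).erase (z, o)).card := by
    apply Finset.card_nbij' (fun q => (Equiv.swap z o q.1, Equiv.swap z o q.2))
      (fun q => (Equiv.swap z o q.1, Equiv.swap z o q.2))
    · intro q hq
      rw [Finset.mem_coe, Finset.mem_erase, Finset.mem_filter] at hq ⊢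
      obtain ⟨hq1, _, hq2⟩ := hq
      have hne' : ¬((q.1 : ℕ) = 0 ∧ (q.2 : ℕ) = 1) := by
        rintro ⟨u, v⟩
        apply hq1
        have ea : q.1 = z := Fin.ext_iff.mpr (by omega)
        have eb : q.2 = o := Fin.ext_iff.mpr (by omega)
        rw [Prod.ext_iff]
        exact ⟨ea, eb⟩
      obtain ⟨hmem, hval⟩ := flip_pair z o hz ho σ q.1 q.2 hq2 hne'
      refine ⟨?_, Finset.mem_univ _, hmem⟩
      rintro he
      simp only [Prod.mk.injEq] at he
      exact hval ⟨by rw [he.1, hz], by rw [he.2, ho]⟩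
    · intro q hq
      rw [Finset.mem_coe, Finset.mem_erase, Finset.mem_filter] at hq ⊢
      obtain ⟨hq1, _, hq2⟩ := hq
      have hne' : ¬((q.1 : ℕ) = 0 ∧ (q.2 : ℕ) = 1) := by
        rintro ⟨u, v⟩
        apply hq1
        have ea : q.1 = z := Fin.ext_iff.mpr (by omega)
        have eb : q.2 = o := Fin.ext_iff.mpr (by omega)
        rw [Prod.ext_iff]
        exact ⟨ea, eb⟩
      obtain ⟨hmem, hval⟩ := flip_pair z o hz ho σ' q.1 q.2 hq2 hne'
      rw [hback] at hmem
      refine ⟨?_, Finset.mem_univ _, hmem⟩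
      rintro he
      simp only [Prod.mk.injEq] at he
      exact hval ⟨by rw [he.1, hz], by rw [he.2, ho]⟩
    · intro q _
      exact Prod.ext (Equiv.swap_apply_self _ _ _) (Equiv.swap_apply_self _ _ _)
    · intro q _
      exact Prod.ext (Equiv.swap_apply_self _ _ _) (Equiv.swap_apply_self _ _ _)
  have mem_iff : ∀ τ : Equiv.Perm (Fin n), ((z, o) ∈ Finset.univ.filter
      (fun q : Fin n × Fin n =>
        q.1 < τ q.1 ∧ q.2 < τ q.2 ∧ q.1 < q.2 ∧ Cross τ q.1 q.2))
      ↔ (0 < (τ z : ℕ) ∧ 1 < (τ o : ℕ) ∧ 1 < (τ z : ℕ) ∧ (τ z : ℕ) < (τ o : ℕ)) := by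
    intro τ
    rw [Finset.mem_filter]
    simp only [Finset.mem_univ, true_and]
    show (z < τ z ∧ o < τ o ∧ z < o ∧ Cross τ z o) ↔ _
    simp only [Cross, Fin.lt_def, hz, ho]
    omega
  rcases Nat.lt_or_ge (σ z : ℕ) (σ o : ℕ) with hlt | hge
  · have hmem : (z, o) ∈ Finset.univ.filter (fun q : Fin n × Fin n =>
        q.1 < σ q.1 ∧ q.2 < σ q.2 ∧ q.1 < q.2 ∧ Cross σ q.1 q.2) := by
      rw [mem_iff]; omega
    have hnot : (z, o) ∉ Finset.univ.filter (fun q : Fin n × Fin n =>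
        q.1 < σ' q.1 ∧ q.2 < σ' q.2 ∧ q.1 < q.2 ∧ Cross σ' q.1 q.2) := by
      rw [mem_iff]; omega
    have hA : crossNum σ = ((Finset.univ.filter (fun q : Fin n × Fin n =>
        q.1 < σ q.1 ∧ q.2 < σ q.2 ∧ q.1 < q.2 ∧ Cross σ q.1 q.2)).erase (z, o)).card + 1 := by
      rw [key σ, ← Finset.card_erase_add_one hmem]
    have hB : crossNum σ' = ((Finset.univ.filter (fun q : Fin n × Fin n =>
        q.1 < σ' q.1 ∧ q.2 < σ' q.2 ∧ q.1 < q.2 ∧ Cross σ' q.1 q.2)).erase (z, o)).card := by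
      rw [key σ', Finset.erase_eq_of_notMem hnot]
    apply neg_one_pow_sum
    rw [hA, hB, hcard]
    omega
  · have hmem : (z, o) ∈ Finset.univ.filter (fun q : Fin n × Fin n =>
        q.1 < σ' q.1 ∧ q.2 < σ' q.2 ∧ q.1 < q.2 ∧ Cross σ' q.1 q.2) := by
      rw [mem_iff]; omega
    have hnot : (z, o) ∉ Finset.univ.filter (fun q : Fin n × Fin n =>
        q.1 < σ q.1 ∧ q.2 < σ q.2 ∧ q.1 < q.2 ∧ Cross σ q.1 q.2) := by
      rw [mem_iff]; omega
    have hA : crossNum σ' = ((Finset.univ.filter (fun q : Fin n × Fin n =>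
        q.1 < σ' q.1 ∧ q.2 < σ' q.2 ∧ q.1 < q.2 ∧ Cross σ' q.1 q.2)).erase (z, o)).card + 1 := by
      rw [key σ', ← Finset.card_erase_add_one hmem]
    have hB : crossNum σ = ((Finset.univ.filter (fun q : Fin n × Fin n =>
        q.1 < σ q.1 ∧ q.2 < σ q.2 ∧ q.1 < q.2 ∧ Cross σ q.1 q.2)).erase (z, o)).card := by
      rw [key σ, Finset.erase_eq_of_notMem hnot]
    apply neg_one_pow_sum
    rw [hA, hB, hcard]
    omega

/-- shift a point of `Fin (2p)` up by two into `Fin (2(p+1))`. -/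
def shift2 {p : ℕ} (y : Fin (2 * p)) : Fin (2 * (p + 1)) :=
  ⟨(y : ℕ) + 2, by have := y.isLt; omega⟩

/-- extend a diagram on `2p` points by a new chord `(0,1)` in front. -/
def extCD (p : ℕ) (τ : Equiv.Perm (Fin (2 * p))) : Equiv.Perm (Fin (2 * (p + 1))) where
  toFun x := if h : (x : ℕ) < 2 then ⟨1 - (x : ℕ), by omega⟩
    else shift2 (τ ⟨(x : ℕ) - 2, by have := x.isLt; omega⟩)
  invFun x := if h : (x : ℕ) < 2 then ⟨1 - (x : ℕ), by omega⟩
    else shift2 (τ.symm ⟨(x : ℕ) - 2, by have := x.isLt; omega⟩)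
  left_inv x := by
    dsimp only
    by_cases h : (x : ℕ) < 2
    · rw [dif_pos h]
      have h2 : ((⟨1 - (x : ℕ), by omega⟩ : Fin (2 * (p + 1))) : ℕ) < 2 := by simp
      rw [dif_pos h2]
      apply Fin.ext
      simp
      omega
    · rw [dif_neg h]
      have h2 : ¬ ((shift2 (τ ⟨(x : ℕ) - 2, by have := x.isLt; omega⟩) : ℕ) < 2) := by
        simp [shift2]
      rw [dif_neg h2]
      apply Fin.ext
      have e : (⟨(shift2 (τ ⟨(x : ℕ) - 2, by have := x.isLt; omega⟩) : ℕ) - 2,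
          by have := x.isLt; simp [shift2]⟩ : Fin (2 * p))
          = τ ⟨(x : ℕ) - 2, by have := x.isLt; omega⟩ := by
        apply Fin.ext
        simp [shift2]
      rw [e, Equiv.symm_apply_apply]
      simp [shift2]
      omega
  right_inv x := by
    dsimp only
    by_cases h : (x : ℕ) < 2
    · rw [dif_pos h]
      have h2 : ((⟨1 - (x : ℕ), by omega⟩ : Fin (2 * (p + 1))) : ℕ) < 2 := by simp
      rw [dif_pos h2]
      apply Fin.ext
      simp
      omega
    · rw [dif_neg h]
      have h2 : ¬ ((shift2 (τ.symm ⟨(x : ℕ) - 2, by have := x.isLt; omega⟩) : ℕ) < 2) := by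
        simp [shift2]
      rw [dif_neg h2]
      apply Fin.ext
      have e : (⟨(shift2 (τ.symm ⟨(x : ℕ) - 2, by have := x.isLt; omega⟩) : ℕ) - 2,
          by have := x.isLt; simp [shift2]⟩ : Fin (2 * p))
          = τ.symm ⟨(x : ℕ) - 2, by have := x.isLt; omega⟩ := by
        apply Fin.ext
        simp [shift2]
      rw [e, Equiv.apply_symm_apply]
      simp [shift2]
      omega

lemma extCD_val_lt (p : ℕ) (τ : Equiv.Perm (Fin (2 * p))) (x : Fin (2 * (p + 1)))
    (h : (x : ℕ) < 2) : ((extCD p τ) x : ℕ) = 1 - (x : ℕ) := by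
  show ((if h : (x : ℕ) < 2 then _ else _ : Fin (2 * (p + 1))) : ℕ) = _
  rw [dif_pos h]

lemma extCD_val_ge (p : ℕ) (τ : Equiv.Perm (Fin (2 * p))) (x : Fin (2 * (p + 1)))
    (h : ¬ ((x : ℕ) < 2)) :
    ((extCD p τ) x : ℕ) = (τ ⟨(x : ℕ) - 2, by have := x.isLt; omega⟩ : ℕ) + 2 := by
  show ((if h : (x : ℕ) < 2 then _ else _ : Fin (2 * (p + 1))) : ℕ) = _
  rw [dif_neg h]
  rfl

lemma extCD_shift2 (p : ℕ) (τ : Equiv.Perm (Fin (2 * p))) (a : Fin (2 * p)) :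
    ((extCD p τ) (shift2 a) : ℕ) = (τ a : ℕ) + 2 := by
  have h : ¬ ((shift2 a : ℕ) < 2) := by simp [shift2]
  rw [extCD_val_ge p τ _ h]
  have e : (⟨(shift2 a : ℕ) - 2, by have := (shift2 a).isLt; omega⟩ : Fin (2 * p)) = a := by
    apply Fin.ext
    simp [shift2]
  rw [e]

lemma extCD_isCD (p : ℕ) (τ : Equiv.Perm (Fin (2 * p))) (h : IsChordDiagram τ) :
    IsChordDiagram (extCD p τ) := by
  obtain ⟨hinv, hfpf⟩ := h
  constructor
  · intro x
    by_cases hx : (x : ℕ) < 2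
    · have v1 := extCD_val_lt p τ x hx
      have hx2 : ((extCD p τ) x : ℕ) < 2 := by omega
      have v2 := extCD_val_lt p τ _ hx2
      exact Fin.ext (by omega)
    · have v1 := extCD_val_ge p τ x hx
      have hx2 : ¬ (((extCD p τ) x : ℕ) < 2) := by omega
      have v2 := extCD_val_ge p τ _ hx2
      apply Fin.ext
      rw [v2]
      have e : (⟨(((extCD p τ) x : ℕ)) - 2, by have := ((extCD p τ) x).isLt; omega⟩ : Fin (2 * p))
          = τ ⟨(x : ℕ) - 2, by have := x.isLt; omega⟩ := by
        apply Fin.ext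
        show ((extCD p τ) x : ℕ) - 2 = _
        omega
      rw [e, hinv]
      have := x.isLt
      simp
      omega
  · intro x hx
    by_cases h2 : (x : ℕ) < 2
    · have v1 := extCD_val_lt p τ x h2
      have := Fin.ext_iff.mp hx
      omega
    · have v1 := extCD_val_ge p τ x h2
      have := Fin.ext_iff.mp hx
      have := hfpf ⟨(x : ℕ) - 2, by have := x.isLt; omega⟩
      rw [Fin.ne_iff_vne] at this
      simp at this
      omega

lemma extCD_crossNum (p : ℕ) (τ : Equiv.Perm (Fin (2 * p))) :
    crossNum (extCD p τ) = crossNum τ := by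
  symm
  apply Finset.card_bij (fun (q : Fin (2 * p) × Fin (2 * p)) _ => (shift2 q.1, shift2 q.2))
  · intro q hq
    rw [Finset.mem_filter] at hq ⊢
    obtain ⟨-, h1, h2, h3, h4⟩ := hq
    have ea := extCD_shift2 p τ q.1
    have eb := extCD_shift2 p τ q.2
    have sa : (shift2 q.1 : ℕ) = (q.1 : ℕ) + 2 := rfl
    have sb : (shift2 q.2 : ℕ) = (q.2 : ℕ) + 2 := rfl
    rw [Fin.lt_def] at h1 h2 h3
    rcases h4 with ⟨x1, x2, x3⟩ | ⟨x1, x2, x3⟩ <;> rw [Fin.lt_def] at x1 x2 x3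
    · refine ⟨Finset.mem_univ _, ?_⟩
      show _ ∧ _ ∧ _ ∧ Cross _ _ _
      simp only [Cross, Fin.lt_def]
      omega
    · refine ⟨Finset.mem_univ _, ?_⟩
      show _ ∧ _ ∧ _ ∧ Cross _ _ _
      simp only [Cross, Fin.lt_def]
      omega
  · intro q1 _ q2 _ he
    simp only [Prod.mk.injEq] at he
    have e1 : (q1.1 : ℕ) = (q2.1 : ℕ) := by
      have := Fin.ext_iff.mp he.1; simp [shift2] at this; omega
    have e2 : (q1.2 : ℕ) = (q2.2 : ℕ) := by
      have := Fin.ext_iff.mp he.2; simp [shift2] at this; omega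
    exact Prod.ext (Fin.ext e1) (Fin.ext e2)
  · intro q hq
    rw [Finset.mem_filter] at hq
    obtain ⟨-, h1, h2, h3, h4⟩ := hq
    -- q.1 and q.2 have values ≥ 2
    have hq1 : ¬ ((q.1 : ℕ) < 2) := by
      intro hlt
      have v1 := extCD_val_lt p τ q.1 hlt
      rw [Fin.lt_def] at h1 h3
      rcases h4 with ⟨x1, x2, -⟩ | ⟨x1, -, -⟩
      · rw [Fin.lt_def] at x1 x2; omega
      · rw [Fin.lt_def] at x1; omega
    have hq2 : ¬ ((q.2 : ℕ) < 2) := by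
      rw [Fin.lt_def] at h3
      omega
    refine ⟨(⟨(q.1 : ℕ) - 2, by have := q.1.isLt; omega⟩, ⟨(q.2 : ℕ) - 2, by have := q.2.isLt; omega⟩), ?_, ?_⟩
    · rw [Finset.mem_filter]
      refine ⟨Finset.mem_univ _, ?_⟩
      have v1 := extCD_val_ge p τ q.1 hq1
      have v2 := extCD_val_ge p τ q.2 hq2
      rw [Fin.lt_def] at h1 h2 h3
      show _ ∧ _ ∧ _ ∧ Cross _ _ _
      simp only [Cross, Fin.lt_def]
      rcases h4 with ⟨x1, x2, x3⟩ | ⟨x1, x2, x3⟩ <;> rw [Fin.lt_def] at x1 x2 x3 <;> omega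
    · have e1 : shift2 (⟨(q.1 : ℕ) - 2, by have := q.1.isLt; omega⟩ : Fin (2 * p)) = q.1 := by
        apply Fin.ext; simp [shift2]; omega
      have e2 : shift2 (⟨(q.2 : ℕ) - 2, by have := q.2.isLt; omega⟩ : Fin (2 * p)) = q.2 := by
        apply Fin.ext; simp [shift2]; omega
      rw [Prod.ext_iff]
      exact ⟨e1, e2⟩


/-- The crossing generating function of chord diagrams evaluated at `η = -1` equals `1`. -/
theorem graded_count (p : ℕ) :
    (∑ σ ∈ chordDiagrams p, (-1 : ℤ) ^ crossNum σ) = 1 := by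
  induction p with
  | zero =>
    have h1 : chordDiagrams 0 = {1} := by
      apply Finset.eq_singleton_iff_unique_mem.mpr
      refine ⟨Finset.mem_filter.mpr ⟨Finset.mem_univ _, fun x => x.elim0, fun x => x.elim0⟩, ?_⟩
      intro σ _
      apply Equiv.ext
      intro x
      exact x.elim0
    rw [h1, Finset.sum_singleton]
    have h2 : crossNum (1 : Equiv.Perm (Fin (2 * 0))) = 0 := by
      simp [crossNum]
    rw [h2, pow_zero]
  | succ p ih =>
    classical
    set z : Fin (2 * (p + 1)) := ⟨0, by omega⟩ with hzdef
    set o : Fin (2 * (p + 1)) := ⟨1, by omega⟩ with hodef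
    have hz : (z : ℕ) = 0 := rfl
    have ho : (o : ℕ) = 1 := rfl
    rw [← Finset.sum_filter_add_sum_filter_not (chordDiagrams (p + 1))
      (fun σ => σ z = o) (fun σ => (-1 : ℤ) ^ crossNum σ)]
    have part2 : (∑ σ ∈ (chordDiagrams (p + 1)).filter (fun σ => ¬ σ z = o),
        (-1 : ℤ) ^ crossNum σ) = 0 := by
      refine Finset.sum_involution
        (fun σ _ => Equiv.swap z o * σ * Equiv.swap z o) ?_ ?_ ?_ ?_
      · intro σ hσ
        rw [Finset.mem_filter] at hσ
        obtain ⟨hcd, hne⟩ := hσ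
        simp only [chordDiagrams, Finset.mem_filter, Finset.mem_univ, true_and] at hcd
        obtain ⟨hinv, hfpf⟩ := hcd
        rw [add_comm]
        exact flip_parity z o hz ho σ hinv hfpf hne
      · intro σ hσ _
        rw [Finset.mem_filter] at hσ
        obtain ⟨hcd, hne⟩ := hσ
        simp only [chordDiagrams, Finset.mem_filter, Finset.mem_univ, true_and] at hcd
        obtain ⟨hinv, hfpf⟩ := hcd
        intro he
        have hval := Equiv.ext_iff.mp he z
        rw [Equiv.Perm.mul_apply, Equiv.Perm.mul_apply, Equiv.swap_apply_left] at hval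
        have hσo0 : (σ o : ℕ) ≠ 0 := by
          intro hx
          apply hne
          have e : σ o = z := Fin.ext_iff.mpr (by omega)
          rw [← e, hinv]
        have hσo1 : (σ o : ℕ) ≠ 1 := fun hx => hfpf o (Fin.ext_iff.mpr (by omega))
        rw [Equiv.swap_apply_of_ne_of_ne (fun e => hσo0 (by rw [e, hz]))
          (fun e => hσo1 (by rw [e, ho]))] at hval
        have h5 := σ.injective hval
        have := Fin.ext_iff.mp h5
        omega
      · intro σ hσ
        rw [Finset.mem_filter] at hσ ⊢
        obtain ⟨hcd, hne⟩ := hσ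
        simp only [chordDiagrams, Finset.mem_filter, Finset.mem_univ, true_and] at hcd
        obtain ⟨hinv, hfpf⟩ := hcd
        have hinv' : ∀ x, (Equiv.swap z o * σ * Equiv.swap z o)
            ((Equiv.swap z o * σ * Equiv.swap z o) x) = x := by
          intro x
          simp [Equiv.Perm.mul_apply, Equiv.swap_apply_self, hinv]
        have hfpf' : ∀ x, (Equiv.swap z o * σ * Equiv.swap z o) x ≠ x := by
          intro x he
          simp only [Equiv.Perm.mul_apply] at he
          have he2 := congrArg (Equiv.swap z o) he
          rw [Equiv.swap_apply_self] at he2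
          exact hfpf _ he2
        refine ⟨?_, ?_⟩
        · simp only [chordDiagrams, Finset.mem_filter, Finset.mem_univ, true_and]
          exact ⟨hinv', hfpf'⟩
        · intro he
          simp only [Equiv.Perm.mul_apply, Equiv.swap_apply_left] at he
          have he2 := congrArg (Equiv.swap z o) he
          rw [Equiv.swap_apply_self, Equiv.swap_apply_right] at he2
          apply hne
          rw [← he2, hinv]
      · intro σ _
        apply Equiv.ext
        intro x
        simp [Equiv.Perm.mul_apply, Equiv.swap_apply_self]
    rw [part2, add_zero]
    conv_rhs => rw [← ih]
    symm
    apply Finset.sum_bij (fun (τ : Equiv.Perm (Fin (2 * p))) (_ : τ ∈ chordDiagrams p) => extCD p τ)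
    · intro τ hτ
      simp only [chordDiagrams, Finset.mem_filter, Finset.mem_univ, true_and] at hτ
      rw [Finset.mem_filter]
      refine ⟨?_, ?_⟩
      · simp only [chordDiagrams, Finset.mem_filter, Finset.mem_univ, true_and]
        exact extCD_isCD p τ hτ
      · apply Fin.ext
        rw [extCD_val_lt p τ z (by rw [hz]; omega), hz, ho]
    · intro a1 _ a2 _ he
      apply Equiv.ext
      intro i
      have h1 := extCD_shift2 p a1 i
      have h2 := extCD_shift2 p a2 i
      rw [he] at h1
      apply Fin.ext
      omega
    · intro b hb
      rw [Finset.mem_filter] at hb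
      obtain ⟨hcd, hbz⟩ := hb
      simp only [chordDiagrams, Finset.mem_filter, Finset.mem_univ, true_and] at hcd
      obtain ⟨hinv, hfpf⟩ := hcd
      have hbo : b o = z := by rw [← hbz, hinv]
      have key : ∀ i : Fin (2 * p), 2 ≤ (b (shift2 i) : ℕ) := by
        intro i
        have hs : ((shift2 i : Fin (2 * (p + 1))) : ℕ) = (i : ℕ) + 2 := rfl
        have hne0 : b (shift2 i) ≠ z := by
          intro e
          have e2 : shift2 i = b z := by rw [← e, hinv]
          rw [hbz] at e2
          have h3 := Fin.ext_iff.mp e2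
          omega
        have hne1 : b (shift2 i) ≠ o := by
          intro e
          have e2 : shift2 i = b o := by rw [← e, hinv]
          rw [hbo] at e2
          have h3 := Fin.ext_iff.mp e2
          omega
        have h0 : (b (shift2 i) : ℕ) ≠ 0 := fun hx => hne0 (Fin.ext (by omega))
        have h1 : (b (shift2 i) : ℕ) ≠ 1 := fun hx => hne1 (Fin.ext (by omega))
        omega
      have hbnd : ∀ i : Fin (2 * p), (b (shift2 i) : ℕ) - 2 < 2 * p := by
        intro i
        have h1 := key i
        have h2 := (b (shift2 i)).isLt
        omega
      have hginv : Function.Involutive (fun i : Fin (2 * p) =>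
          (⟨(b (shift2 i) : ℕ) - 2, hbnd i⟩ : Fin (2 * p))) := by
        intro i
        have e : shift2 (⟨(b (shift2 i) : ℕ) - 2, hbnd i⟩ : Fin (2 * p)) = b (shift2 i) := by
          apply Fin.ext
          show ((b (shift2 i) : ℕ) - 2) + 2 = _
          have := key i
          omega
        apply Fin.ext
        show (b (shift2 (⟨(b (shift2 i) : ℕ) - 2, hbnd i⟩ : Fin (2 * p))) : ℕ) - 2 = (i : ℕ)
        rw [e, hinv]
        show (i : ℕ) + 2 - 2 = (i : ℕ)
        omega
      refine ⟨Function.Involutive.toPerm _ hginv, ?_, ?_⟩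
      · simp only [chordDiagrams, Finset.mem_filter, Finset.mem_univ, true_and]
        refine ⟨fun i => hginv i, ?_⟩
        intro i he
        have h3 : (b (shift2 i) : ℕ) - 2 = (i : ℕ) := Fin.ext_iff.mp he
        have hk := key i
        apply hfpf (shift2 i)
        apply Fin.ext
        show (b (shift2 i) : ℕ) = (i : ℕ) + 2
        omega
      · apply Equiv.ext
        intro x
        by_cases hx : (x : ℕ) < 2
        · apply Fin.ext
          rw [extCD_val_lt p _ x hx]
          rcases (by omega : (x : ℕ) = 0 ∨ (x : ℕ) = 1) with h | h
          · have ex : x = z := Fin.ext (by omega)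
            rw [ex, hbz, hz, ho]
          · have ex : x = o := Fin.ext (by omega)
            rw [ex, hbo, ho, hz]
        · apply Fin.ext
          rw [extCD_val_ge p _ x hx]
          have pf : (x : ℕ) - 2 < 2 * p := by have := x.isLt; omega
          have e : shift2 (⟨(x : ℕ) - 2, pf⟩ : Fin (2 * p)) = x := by
            apply Fin.ext
            show ((x : ℕ) - 2) + 2 = (x : ℕ)
            omega
          have hk := key (⟨(x : ℕ) - 2, pf⟩ : Fin (2 * p))
          rw [e] at hk
          show ((b (shift2 (⟨(x : ℕ) - 2, pf⟩ : Fin (2 * p))) : ℕ) - 2) + 2 = (b x : ℕ)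
          rw [e]
          omega
    · intro τ _
      rw [extCD_crossNum]
end

section
/- The total number of triangles in the intersection graphs of all chord diagrams: Σ_{i=1}^{(2p-1)!!} T_i = (1/15) binom(p,3) (2p-1)!!, where T_i is the number of triangles in the intersection graph of the i-th chord diagram with p chords. -/
open Finset

set_option maxHeartbeats 1000000

namespace ChordAux
open Equiv


variable {N : ℕ}

/-- Fixed-point-free involutions supported on `s`. -/
def invOn (s : Finset (Fin N)) : Finset (Equiv.Perm (Fin N)) :=
  univ.filter fun σ => (∀ x, x ∉ s → σ x = x) ∧ ∀ x ∈ s, σ x ∈ s ∧ σ (σ x) = x ∧ σ x ≠ x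

lemma df_step {c : ℕ} (hc : Even c) (h0 : c ≠ 0) :
    (c - 1) * Nat.doubleFactorial (c - 3) = Nat.doubleFactorial (c - 1) := by
  obtain ⟨r, rfl⟩ := hc
  match r with
  | 0 => omega
  | 1 => simp [Nat.doubleFactorial]
  | (r + 2) =>
    have h1 : r + 2 + (r + 2) - 1 = (2 * r + 1) + 2 := by omega
    have h3 : r + 2 + (r + 2) - 3 = 2 * r + 1 := by omega
    rw [h1, h3, Nat.doubleFactorial_add_two]

lemma card_invOn : ∀ s : Finset (Fin N), Even s.card →
    (invOn s).card = Nat.doubleFactorial (s.card - 1) := by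
  intro s
  induction s using Finset.strongInduction with
  | _ s ih =>
    intro hs
    rcases s.eq_empty_or_nonempty with rfl | ⟨a, ha⟩
    · have h1 : invOn (∅ : Finset (Fin N)) = {1} := by
        ext σ
        simp only [invOn, mem_filter, mem_univ, true_and, notMem_empty, not_false_iff,
          forall_true_left, mem_singleton]
        constructor
        · rintro ⟨h, -⟩
          exact Equiv.ext h
        · rintro rfl
          simp
      rw [h1]
      simp [Nat.doubleFactorial]
    · have key : (invOn s).card = ∑ b ∈ s.erase a, ((invOn s).filter fun σ => σ a = b).card := by
        apply card_eq_sum_card_fiberwise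
        intro σ hσ
        simp only [invOn, mem_coe, mem_filter, mem_univ, true_and] at hσ
        obtain ⟨-, h2⟩ := hσ
        obtain ⟨m1, _, m3⟩ := h2 a ha
        exact mem_erase.mpr ⟨m3, m1⟩
      have hb : ∀ b ∈ s.erase a, ((invOn s).filter fun σ => σ a = b).card
          = (invOn ((s.erase a).erase b)).card := by
        intro b hbm
        rcases mem_erase.mp hbm with ⟨hba, hbs⟩
        apply Finset.card_nbij' (i := fun σ => σ * Equiv.swap a b) (j := fun τ => τ * Equiv.swap a b)
        · intro σ hσ
          simp only [invOn, mem_coe, mem_filter, mem_univ, true_and] at hσ ⊢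
          obtain ⟨⟨hfix, hmem⟩, hσa⟩ := hσ
          have hσb : σ b = a := by
            have := (hmem a ha).2.1
            rw [hσa] at this; exact this
          constructor
          · intro x hx
            simp only [Perm.mul_apply]
            rcases eq_or_ne x a with rfl | hxa
            · rw [swap_apply_left, hσb]
            rcases eq_or_ne x b with rfl | hxb
            · rw [swap_apply_right, hσa]
            · rw [swap_apply_of_ne_of_ne hxa hxb]
              apply hfix
              intro hxs
              exact hx (mem_erase.mpr ⟨hxb, mem_erase.mpr ⟨hxa, hxs⟩⟩)
          · intro x hx
            rcases mem_erase.mp hx with ⟨hxb, hx'⟩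
            rcases mem_erase.mp hx' with ⟨hxa, hxs⟩
            simp only [Perm.mul_apply, swap_apply_of_ne_of_ne hxa hxb]
            obtain ⟨q1, q2, q3⟩ := hmem x hxs
            have hσxa : σ x ≠ a := fun h => hxb (by rw [← q2, h, hσa])
            have hσxb : σ x ≠ b := fun h => hxa (by rw [← q2, h, hσb])
            refine ⟨mem_erase.mpr ⟨hσxb, mem_erase.mpr ⟨hσxa, q1⟩⟩, ?_, q3⟩
            rw [swap_apply_of_ne_of_ne hσxa hσxb, q2]
        · intro τ hτ
          simp only [invOn, mem_coe, mem_filter, mem_univ, true_and] at hτ ⊢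
          obtain ⟨hfix, hmem⟩ := hτ
          have hfa : τ a = a := hfix a (by simp)
          have hfb : τ b = b := hfix b (by simp [hba.symm])
          have hmain : (∀ x, x ∉ s → (τ * Equiv.swap a b) x = x) ∧
              ∀ x ∈ s, (τ * Equiv.swap a b) x ∈ s ∧
                (τ * Equiv.swap a b) ((τ * Equiv.swap a b) x) = x ∧ (τ * Equiv.swap a b) x ≠ x := by
            constructor
            · intro x hx
              have hxa : x ≠ a := fun h => hx (h ▸ ha)
              have hxb : x ≠ b := fun h => hx (h ▸ hbs)
              simp only [Perm.mul_apply, swap_apply_of_ne_of_ne hxa hxb]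
              exact hfix x fun hc => hx ((mem_erase.mp (mem_erase.mp hc).2).2)
            · intro x hxs
              rcases eq_or_ne x a with rfl | hxa
              · simp only [Perm.mul_apply, swap_apply_left, hfb, swap_apply_right, hfa]
                exact ⟨hbs, trivial, hba⟩
              rcases eq_or_ne x b with rfl | hxb
              · simp only [Perm.mul_apply, swap_apply_right, hfa, swap_apply_left, hfb]
                exact ⟨ha, trivial, hba.symm⟩
              · have hxm : x ∈ (s.erase a).erase b := mem_erase.mpr ⟨hxb, mem_erase.mpr ⟨hxa, hxs⟩⟩
                obtain ⟨q1, q2, q3⟩ := hmem x hxm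
                rcases mem_erase.mp q1 with ⟨hτxb, q1'⟩
                rcases mem_erase.mp q1' with ⟨hτxa, hτxs⟩
                simp only [Perm.mul_apply, swap_apply_of_ne_of_ne hxa hxb,
                  swap_apply_of_ne_of_ne hτxa hτxb, q2]
                exact ⟨hτxs, trivial, q3⟩
          refine ⟨hmain, ?_⟩
          simp only [Perm.mul_apply, swap_apply_left, hfb]
        · intro σ _
          dsimp only; rw [mul_assoc, Equiv.swap_mul_self, mul_one]
        · intro τ _
          dsimp only; rw [mul_assoc, Equiv.swap_mul_self, mul_one]
      rw [key, Finset.sum_congr rfl hb]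
      have hcard2 : ∀ b ∈ s.erase a, ((s.erase a).erase b).card = s.card - 2 := by
        intro b hbm
        rw [card_erase_of_mem hbm, card_erase_of_mem ha]; omega
      have hsum : ∀ b ∈ s.erase a, (invOn ((s.erase a).erase b)).card
          = Nat.doubleFactorial (s.card - 3) := by
        intro b hbm
        have hss : (s.erase a).erase b ⊂ s :=
          (erase_subset _ _).trans_ssubset (erase_ssubset ha)
        have hev : Even (((s.erase a).erase b).card) := by
          rw [hcard2 b hbm]
          obtain ⟨r, hr⟩ := hs
          exact ⟨r - 1, by omega⟩
        rw [ih _ hss hev, hcard2 b hbm]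
        congr 1
        all_goals omega
      rw [Finset.sum_congr rfl hsum, sum_const, smul_eq_mul, card_erase_of_mem ha]
      exact df_step hs (by rintro h; rw [card_eq_zero.mp h] at ha; simp at ha)


def TriP (σ : Equiv.Perm (Fin N)) (t : Fin N × Fin N × Fin N) : Prop :=
  t.1 < σ t.1 ∧ t.2.1 < σ t.2.1 ∧ t.2.2 < σ t.2.2 ∧
    t.1 < t.2.1 ∧ t.2.1 < t.2.2 ∧
    Cross σ t.1 t.2.1 ∧ Cross σ t.2.1 t.2.2 ∧ Cross σ t.1 t.2.2

instance (σ : Equiv.Perm (Fin N)) (t : Fin N × Fin N × Fin N) : Decidable (TriP σ t) := by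
  unfold TriP; infer_instance

lemma triNum_eq (σ : Equiv.Perm (Fin N)) :
    triNum σ = (univ.filter (TriP σ)).card := by
  unfold triNum TriP
  congr 1

lemma chain_of_tri (σ : Equiv.Perm (Fin N)) (a b c : Fin N) (h : TriP σ (a, b, c)) :
    a < b ∧ b < c ∧ c < σ a ∧ σ a < σ b ∧ σ b < σ c := by
  obtain ⟨h1, h2, h3, hab, hbc, hC1, hC2, hC3⟩ := h
  rcases hC1 with ⟨-, hx1, hy1⟩ | ⟨hba, -⟩
  · rcases hC2 with ⟨-, hx2, hy2⟩ | ⟨hcb, -⟩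
    · rcases hC3 with ⟨-, hx3, -⟩ | ⟨hca, -⟩
      · exact ⟨hab, hbc, hx3, hy1, hy2⟩
      · exact absurd hca (lt_asymm (hab.trans hbc))
    · exact absurd hcb (lt_asymm hbc)
  · exact absurd hba (lt_asymm hab)

section Config

lemma six_card {x0 x1 x2 x3 x4 x5 : Fin N} (h01 : x0 < x1) (h12 : x1 < x2) (h23 : x2 < x3)
    (h34 : x3 < x4) (h45 : x4 < x5) :
    ({x0, x1, x2, x3, x4, x5} : Finset (Fin N)).card = 6 := by
  have h02 := h01.trans h12
  have h03 := h02.trans h23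
  have h04 := h03.trans h34
  have h05 := h04.trans h45
  have h13 := h12.trans h23
  have h14 := h13.trans h34
  have h15 := h14.trans h45
  have h24 := h23.trans h34
  have h25 := h24.trans h45
  have h35 := h34.trans h45
  rw [card_insert_of_notMem (by simp [h01.ne, h02.ne, h03.ne, h04.ne, h05.ne]),
    card_insert_of_notMem (by simp [h12.ne, h13.ne, h14.ne, h15.ne]),
    card_insert_of_notMem (by simp [h23.ne, h24.ne, h25.ne]),
    card_insert_of_notMem (by simp [h34.ne, h35.ne]),
    card_insert_of_notMem (by simp [h45.ne]),
    card_singleton]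

/-- The "triple swap" matching on six points. -/
lemma w_spec {x0 x1 x2 x3 x4 x5 : Fin N} (h01 : x0 < x1) (h12 : x1 < x2) (h23 : x2 < x3)
    (h34 : x3 < x4) (h45 : x4 < x5) :
    (swap x0 x3 * swap x1 x4 * swap x2 x5 : Equiv.Perm (Fin N)) x0 = x3 ∧
    (swap x0 x3 * swap x1 x4 * swap x2 x5 : Equiv.Perm (Fin N)) x1 = x4 ∧
    (swap x0 x3 * swap x1 x4 * swap x2 x5 : Equiv.Perm (Fin N)) x2 = x5 ∧
    (swap x0 x3 * swap x1 x4 * swap x2 x5 : Equiv.Perm (Fin N)) x3 = x0 ∧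
    (swap x0 x3 * swap x1 x4 * swap x2 x5 : Equiv.Perm (Fin N)) x4 = x1 ∧
    (swap x0 x3 * swap x1 x4 * swap x2 x5 : Equiv.Perm (Fin N)) x5 = x2 ∧
    ∀ x, x ∉ ({x0, x1, x2, x3, x4, x5} : Finset (Fin N)) →
      (swap x0 x3 * swap x1 x4 * swap x2 x5 : Equiv.Perm (Fin N)) x = x := by
  have h02 := h01.trans h12
  have h03 := h02.trans h23
  have h04 := h03.trans h34
  have h05 := h04.trans h45
  have h13 := h12.trans h23
  have h14 := h13.trans h34
  have h15 := h14.trans h45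
  have h24 := h23.trans h34
  have h25 := h24.trans h45
  have h35 := h34.trans h45
  refine ⟨?_, ?_, ?_, ?_, ?_, ?_, ?_⟩
  · simp only [Perm.mul_apply]
    rw [swap_apply_of_ne_of_ne h02.ne h05.ne, swap_apply_of_ne_of_ne h01.ne h04.ne,
      swap_apply_left]
  · simp only [Perm.mul_apply]
    rw [swap_apply_of_ne_of_ne h12.ne h15.ne, swap_apply_left,
      swap_apply_of_ne_of_ne h04.ne' h34.ne']
  · simp only [Perm.mul_apply]
    rw [swap_apply_left, swap_apply_of_ne_of_ne h15.ne' h45.ne',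
      swap_apply_of_ne_of_ne h05.ne' h35.ne']
  · simp only [Perm.mul_apply]
    rw [swap_apply_of_ne_of_ne h23.ne' h35.ne, swap_apply_of_ne_of_ne h13.ne' h34.ne,
      swap_apply_right]
  · simp only [Perm.mul_apply]
    rw [swap_apply_of_ne_of_ne h24.ne' h45.ne, swap_apply_right,
      swap_apply_of_ne_of_ne h01.ne' h13.ne]
  · simp only [Perm.mul_apply]
    rw [swap_apply_right, swap_apply_of_ne_of_ne h12.ne' h24.ne,
      swap_apply_of_ne_of_ne h02.ne' h23.ne]
  · intro x hx
    simp only [mem_insert, mem_singleton, not_or] at hx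
    obtain ⟨n0, n1, n2, n3, n4, n5⟩ := hx
    simp only [Perm.mul_apply]
    rw [swap_apply_of_ne_of_ne n2 n5, swap_apply_of_ne_of_ne n1 n4,
      swap_apply_of_ne_of_ne n0 n3]

lemma w_invol {x0 x1 x2 x3 x4 x5 : Fin N} (h01 : x0 < x1) (h12 : x1 < x2) (h23 : x2 < x3)
    (h34 : x3 < x4) (h45 : x4 < x5) :
    ∀ x, (swap x0 x3 * swap x1 x4 * swap x2 x5 : Equiv.Perm (Fin N))
      ((swap x0 x3 * swap x1 x4 * swap x2 x5 : Equiv.Perm (Fin N)) x) = x := by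
  obtain ⟨w0, w1, w2, w3, w4, w5, wf⟩ := w_spec h01 h12 h23 h34 h45
  intro x
  by_cases hx : x ∈ ({x0, x1, x2, x3, x4, x5} : Finset (Fin N))
  · simp only [mem_insert, mem_singleton] at hx
    rcases hx with rfl | rfl | rfl | rfl | rfl | rfl
    · rw [w0, w3]
    · rw [w1, w4]
    · rw [w2, w5]
    · rw [w3, w0]
    · rw [w4, w1]
    · rw [w5, w2]
  · rw [wf x hx, wf x hx]

end Config

lemma final_arith (p : ℕ) :
    ((Nat.choose (2 * p) 6 * Nat.doubleFactorial (2 * p - 7) : ℕ) : ℚ)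
      = (1 / 15) * (p.choose 3) * (Nat.doubleFactorial (2 * p - 1)) := by
  match p with
  | 0 => norm_num [Nat.doubleFactorial, Nat.choose]
  | 1 => norm_num [Nat.doubleFactorial, Nat.choose]
  | 2 => norm_num [Nat.doubleFactorial, Nat.choose]
  | 3 => norm_num [Nat.doubleFactorial, Nat.choose]
  | (k + 4) =>
    have h1 : 2 * (k + 4) - 7 = 2 * k + 1 := by omega
    have h2 : 2 * (k + 4) - 1 = 2 * k + 7 := by omega
    have h2' : 2 * (k + 4) = 2 * k + 8 := by omega
    rw [h1, h2, h2']
    have h3 : Nat.doubleFactorial (2 * k + 7)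
        = (2 * k + 7) * ((2 * k + 5) * ((2 * k + 3) * Nat.doubleFactorial (2 * k + 1))) := by
      have d1 : Nat.doubleFactorial (2*k+3) = (2*k+3) * Nat.doubleFactorial (2*k+1) := by
        rw [show 2*k+3 = 2*k+1+2 by ring]; exact Nat.doubleFactorial_add_two _
      have d2 : Nat.doubleFactorial (2*k+5) = (2*k+5) * Nat.doubleFactorial (2*k+3) := by
        rw [show 2*k+5 = 2*k+3+2 by ring]; exact Nat.doubleFactorial_add_two _
      have d3 : Nat.doubleFactorial (2*k+7) = (2*k+7) * Nat.doubleFactorial (2*k+5) := by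
        rw [show 2*k+7 = 2*k+5+2 by ring]; exact Nat.doubleFactorial_add_two _
      rw [d3, d2, d1]
    have hd6 : Nat.descFactorial (2 * k + 8) 6
        = (2*k+3) * ((2*k+4) * ((2*k+5) * ((2*k+6) * ((2*k+7) * (2*k+8))))) := by
      simp only [Nat.descFactorial_succ, Nat.descFactorial_zero, mul_one, Nat.sub_zero]
      have e1 : 2 * k + 8 - 1 = 2*k+7 := by omega
      have e2 : 2 * k + 8 - 2 = 2*k+6 := by omega
      have e3 : 2 * k + 8 - 3 = 2*k+5 := by omega
      have e4 : 2 * k + 8 - 4 = 2*k+4 := by omega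
      have e5 : 2 * k + 8 - 5 = 2*k+3 := by omega
      rw [e1, e2, e3, e4, e5]
    have hd3 : Nat.descFactorial (k + 4) 3 = (k+2) * ((k+3) * (k+4)) := by
      simp only [Nat.descFactorial_succ, Nat.descFactorial_zero, mul_one, Nat.sub_zero]
      have e1 : k + 4 - 1 = k + 3 := by omega
      have e2 : k + 4 - 2 = k + 2 := by omega
      rw [e1, e2]
    have hc6 : ((2*k+8).choose 6 : ℚ)
        = ((2*k+3) * ((2*k+4) * ((2*k+5) * ((2*k+6) * ((2*k+7) * (2*k+8)))))) / 720 := by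
      have := Nat.descFactorial_eq_factorial_mul_choose (2*k+8) 6
      rw [hd6] at this
      have : ((2*k+3) * ((2*k+4) * ((2*k+5) * ((2*k+6) * ((2*k+7) * (2*k+8))))) : ℚ)
          = 720 * ((2*k+8).choose 6 : ℚ) := by
        exact_mod_cast congrArg (Nat.cast : ℕ → ℚ) this
      rw [this]; ring
    have hc3 : ((k+4).choose 3 : ℚ) = ((k+2) * ((k+3) * (k+4))) / 6 := by
      have := Nat.descFactorial_eq_factorial_mul_choose (k+4) 3
      rw [hd3] at this
      have : ((k+2) * ((k+3) * (k+4)) : ℚ) = 6 * ((k+4).choose 3 : ℚ) := by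
        exact_mod_cast congrArg (Nat.cast : ℕ → ℚ) this
      rw [this]; ring
    push_cast [h3, hc6, hc3]
    ring


end ChordAux

open Equiv

open ChordAux in
lemma main_count (p : ℕ) :
    ∑ σ ∈ chordDiagrams p, triNum σ
      = Nat.choose (2 * p) 6 * Nat.doubleFactorial (2 * p - 7) := by
  classical
  have h1 : ∑ σ ∈ chordDiagrams p, triNum σ
      = ((chordDiagrams p).sigma (fun σ => univ.filter (TriP σ))).card := by
    rw [Finset.card_sigma]
    exact Finset.sum_congr rfl fun σ _ => triNum_eq σ
  have h2 : ((powersetCard 6 (univ : Finset (Fin (2 * p)))).sigma fun s => ChordAux.invOn sᶜ).card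
      = Nat.choose (2 * p) 6 * Nat.doubleFactorial (2 * p - 7) := by
    rw [Finset.card_sigma]
    have hx : ∀ s ∈ powersetCard 6 (univ : Finset (Fin (2 * p))),
        (ChordAux.invOn sᶜ).card = Nat.doubleFactorial (2 * p - 7) := by
      intro s hs
      have hcard : s.card = 6 := mem_powersetCard_univ.mp hs
      have h6 : 6 ≤ 2 * p := by
        have := s.card_le_univ
        rw [hcard, Fintype.card_fin] at this
        exact this
      have hc : sᶜ.card = 2 * p - 6 := by
        rw [Finset.card_compl, hcard, Fintype.card_fin]
      have hev : Even (sᶜ.card) := by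
        rw [hc]; exact ⟨p - 3, by omega⟩
      rw [card_invOn _ hev, hc]
      congr 1
      all_goals omega
    rw [Finset.sum_congr rfl hx, sum_const, smul_eq_mul, card_powersetCard, card_univ,
      Fintype.card_fin]
  rw [h1, ← h2]
  refine Finset.card_bij'
    (fun x _ => ⟨{x.2.1, x.2.2.1, x.2.2.2, x.1 x.2.1, x.1 x.2.2.1, x.1 x.2.2.2},
        x.1 * (swap x.2.1 (x.1 x.2.1) * swap x.2.2.1 (x.1 x.2.2.1) *
          swap x.2.2.2 (x.1 x.2.2.2))⟩)
    (fun y hy =>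
      ⟨y.2 * (swap (y.1.orderEmbOfFin (mem_powersetCard_univ.mp (mem_sigma.mp hy).1) 0)
              (y.1.orderEmbOfFin (mem_powersetCard_univ.mp (mem_sigma.mp hy).1) 3) *
            swap (y.1.orderEmbOfFin (mem_powersetCard_univ.mp (mem_sigma.mp hy).1) 1)
              (y.1.orderEmbOfFin (mem_powersetCard_univ.mp (mem_sigma.mp hy).1) 4) *
            swap (y.1.orderEmbOfFin (mem_powersetCard_univ.mp (mem_sigma.mp hy).1) 2)
              (y.1.orderEmbOfFin (mem_powersetCard_univ.mp (mem_sigma.mp hy).1) 5)),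
        (y.1.orderEmbOfFin (mem_powersetCard_univ.mp (mem_sigma.mp hy).1) 0,
         y.1.orderEmbOfFin (mem_powersetCard_univ.mp (mem_sigma.mp hy).1) 1,
         y.1.orderEmbOfFin (mem_powersetCard_univ.mp (mem_sigma.mp hy).1) 2)⟩)
    ?hi ?hj ?left ?right
  case hi =>
    rintro ⟨σ, a, b, c⟩ hx
    dsimp only
    simp only [mem_sigma, chordDiagrams, mem_filter, mem_univ, true_and] at hx
    obtain ⟨hcd, htri⟩ := hx
    obtain ⟨h01, h12, h23, h34, h45⟩ := chain_of_tri σ a b c htri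
    obtain ⟨hinv, hfpf⟩ := hcd
    obtain ⟨w0, w1, w2, w3, w4, w5, wfix⟩ := w_spec h01 h12 h23 h34 h45
    rw [mem_sigma]
    have hmem : ∀ x, σ x ∈ ({a, b, c, σ a, σ b, σ c} : Finset (Fin (2 * p))) →
        x ∈ ({a, b, c, σ a, σ b, σ c} : Finset (Fin (2 * p))) := by
      intro x hx
      simp only [mem_insert, mem_singleton] at hx ⊢
      rcases hx with h | h | h | h | h | h
      · right; right; right; left; rw [← h, hinv x]
      · right; right; right; right; left; rw [← h, hinv x]
      · right; right; right; right; right; rw [← h, hinv x]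
      · left; exact σ.injective h
      · right; left; exact σ.injective h
      · right; right; left; exact σ.injective h
    constructor
    · exact mem_powersetCard_univ.mpr (six_card h01 h12 h23 h34 h45)
    · simp only [ChordAux.invOn, mem_filter, mem_univ, true_and]
      constructor
      · intro x hxc
        have hxs : x ∈ ({a, b, c, σ a, σ b, σ c} : Finset (Fin (2 * p))) := by
          by_contra hh; exact hxc (mem_compl.mpr hh)
        simp only [mem_insert, mem_singleton] at hxs
        rcases hxs with rfl | rfl | rfl | rfl | rfl | rfl
        · show σ ((swap x (σ x) * swap b (σ b) * swap c (σ c)) x) = x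
          rw [w0]; exact hinv x
        · show σ ((swap a (σ a) * swap x (σ x) * swap c (σ c)) x) = x
          rw [w1]; exact hinv x
        · show σ ((swap a (σ a) * swap b (σ b) * swap x (σ x)) x) = x
          rw [w2]; exact hinv x
        · show σ ((swap a (σ a) * swap b (σ b) * swap c (σ c)) (σ a)) = σ a
          rw [w3]
        · show σ ((swap a (σ a) * swap b (σ b) * swap c (σ c)) (σ b)) = σ b
          rw [w4]
        · show σ ((swap a (σ a) * swap b (σ b) * swap c (σ c)) (σ c)) = σ c
          rw [w5]
      · intro x hxc
        have hxs : x ∉ ({a, b, c, σ a, σ b, σ c} : Finset (Fin (2 * p))) := mem_compl.mp hxc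
        have hw1 : (σ * (swap a (σ a) * swap b (σ b) * swap c (σ c))) x = σ x := by
          show σ ((swap a (σ a) * swap b (σ b) * swap c (σ c)) x) = σ x
          rw [wfix x hxs]
        have hσx : σ x ∉ ({a, b, c, σ a, σ b, σ c} : Finset (Fin (2 * p))) :=
          fun hh => hxs (hmem x hh)
        refine ⟨?_, ?_, ?_⟩
        · rw [hw1]; exact mem_compl.mpr hσx
        · rw [hw1]
          show σ ((swap a (σ a) * swap b (σ b) * swap c (σ c)) (σ x)) = x
          rw [wfix _ hσx]
          exact hinv x
        · rw [hw1]; exact hfpf x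
  case left =>
    rintro ⟨σ, a, b, c⟩ hx
    dsimp only
    simp only [mem_sigma, chordDiagrams, mem_filter, mem_univ, true_and] at hx
    obtain ⟨hcd, htri⟩ := hx
    obtain ⟨h01, h12, h23, h34, h45⟩ := chain_of_tri σ a b c htri
    have hmem : ∀ i : Fin 6, ![a, b, c, σ a, σ b, σ c] i
        ∈ ({a, b, c, σ a, σ b, σ c} : Finset (Fin (2 * p))) := by
      intro i
      fin_cases i
      · show a ∈ _; simp
      · show b ∈ _; simp
      · show c ∈ _; simp
      · show σ a ∈ _; simp
      · show σ b ∈ _; simp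
      · show σ c ∈ _; simp
    have hmono : StrictMono ![a, b, c, σ a, σ b, σ c] := by
      rw [Fin.strictMono_iff_lt_succ]
      intro i
      fin_cases i <;> first | exact h01 | exact h12 | exact h23 | exact h34 | exact h45
    have hemb : ∀ h : ({a, b, c, σ a, σ b, σ c} : Finset (Fin (2 * p))).card = 6,
        (({a, b, c, σ a, σ b, σ c} : Finset (Fin (2 * p))).orderEmbOfFin h : Fin 6 → Fin (2 * p))
          = ![a, b, c, σ a, σ b, σ c] :=
      fun h => (Finset.orderEmbOfFin_unique h hmem hmono).symm
    have hWW : ∀ x, (swap a (σ a) * swap b (σ b) * swap c (σ c) : Perm (Fin (2 * p)))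
        ((swap a (σ a) * swap b (σ b) * swap c (σ c) : Perm (Fin (2 * p))) x) = x :=
      w_invol h01 h12 h23 h34 h45
    simp only [hemb]
    show (⟨σ * (swap a (σ a) * swap b (σ b) * swap c (σ c)) *
        (swap (![a, b, c, σ a, σ b, σ c] 0) (![a, b, c, σ a, σ b, σ c] 3) *
          swap (![a, b, c, σ a, σ b, σ c] 1) (![a, b, c, σ a, σ b, σ c] 4) *
          swap (![a, b, c, σ a, σ b, σ c] 2) (![a, b, c, σ a, σ b, σ c] 5)),
        (![a, b, c, σ a, σ b, σ c] 0, ![a, b, c, σ a, σ b, σ c] 1, ![a, b, c, σ a, σ b, σ c] 2)⟩ :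
        (_ : Perm (Fin (2 * p))) × (Fin (2 * p) × Fin (2 * p) × Fin (2 * p)))
      = ⟨σ, (a, b, c)⟩
    have hσ : σ * (swap a (σ a) * swap b (σ b) * swap c (σ c)) *
        (swap a (σ a) * swap b (σ b) * swap c (σ c)) = σ := by
      refine Equiv.ext fun x => ?_
      exact congrArg σ (hWW x)
    show (⟨σ * (swap a (σ a) * swap b (σ b) * swap c (σ c)) *
        (swap a (σ a) * swap b (σ b) * swap c (σ c)), (a, b, c)⟩ :
        (_ : Perm (Fin (2 * p))) × (Fin (2 * p) × Fin (2 * p) × Fin (2 * p)))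
      = ⟨σ, (a, b, c)⟩
    rw [hσ]
  case hj =>
    rintro ⟨s, τ⟩ hy
    have d01 : (0:Fin 6) < 1 := by decide
    have d12 : (1:Fin 6) < 2 := by decide
    have d23 : (2:Fin 6) < 3 := by decide
    have d34 : (3:Fin 6) < 4 := by decide
    have d45 : (4:Fin 6) < 5 := by decide
    have d03 : (0:Fin 6) < 3 := by decide
    have d14 : (1:Fin 6) < 4 := by decide
    have d25 : (2:Fin 6) < 5 := by decide
    have d13 : (1:Fin 6) < 3 := by decide
    have d24 : (2:Fin 6) < 4 := by decide
    have d35 : (3:Fin 6) < 5 := by decide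
    dsimp only
    generalize_proofs hcard6
    have hτ := (mem_sigma.mp hy).2
    simp only [ChordAux.invOn, mem_filter, mem_univ, true_and] at hτ
    obtain ⟨hfixs, hmoves⟩ := hτ
    set e := s.orderEmbOfFin hcard6 with he
    have hlt : ∀ i j : Fin 6, i < j → e i < e j :=
      fun i j h => (s.orderEmbOfFin hcard6).strictMono h
    have hms : ∀ i, e i ∈ s := fun i => s.orderEmbOfFin_mem hcard6 i
    have hfix : ∀ x ∈ s, τ x = x := fun x hx => hfixs x (by simp [mem_compl, hx])
    have h01 := hlt 0 1 d01
    have h12 := hlt 1 2 d12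
    have h23 := hlt 2 3 d23
    have h34 := hlt 3 4 d34
    have h45 := hlt 4 5 d45
    obtain ⟨w0, w1, w2, w3, w4, w5, wfix⟩ := w_spec h01 h12 h23 h34 h45
    have hset : ({e 0, e 1, e 2, e 3, e 4, e 5} : Finset (Fin (2 * p))) = s := by
      apply Finset.eq_of_subset_of_card_le
      · intro x hx
        simp only [mem_insert, mem_singleton] at hx
        rcases hx with rfl | rfl | rfl | rfl | rfl | rfl <;> exact hms _
      · rw [hcard6, six_card h01 h12 h23 h34 h45]
    set W : Perm (Fin (2 * p)) := swap (e 0) (e 3) * swap (e 1) (e 4) * swap (e 2) (e 5) with hW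
    have v0 : (τ * W) (e 0) = e 3 := by
      show τ (W (e 0)) = e 3
      rw [hW, w0]; exact hfix _ (hms 3)
    have v1 : (τ * W) (e 1) = e 4 := by
      show τ (W (e 1)) = e 4
      rw [hW, w1]; exact hfix _ (hms 4)
    have v2 : (τ * W) (e 2) = e 5 := by
      show τ (W (e 2)) = e 5
      rw [hW, w2]; exact hfix _ (hms 5)
    have v3 : (τ * W) (e 3) = e 0 := by
      show τ (W (e 3)) = e 0
      rw [hW, w3]; exact hfix _ (hms 0)
    have v4 : (τ * W) (e 4) = e 1 := by
      show τ (W (e 4)) = e 1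
      rw [hW, w4]; exact hfix _ (hms 1)
    have v5 : (τ * W) (e 5) = e 2 := by
      show τ (W (e 5)) = e 2
      rw [hW, w5]; exact hfix _ (hms 2)
    have vout : ∀ x, x ∉ s → (τ * W) x = τ x := by
      intro x hx
      show τ (W x) = τ x
      rw [hW, wfix x (by rw [hset]; exact hx)]
    rw [mem_sigma]
    constructor
    · -- (τ * W) is a chord diagram
      simp only [chordDiagrams, mem_filter, mem_univ, true_and]
      constructor
      · intro x
        by_cases hx : x ∈ s
        · rw [← hset] at hx
          simp only [mem_insert, mem_singleton] at hx
          rcases hx with rfl | rfl | rfl | rfl | rfl | rfl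
          · rw [v0, v3]
          · rw [v1, v4]
          · rw [v2, v5]
          · rw [v3, v0]
          · rw [v4, v1]
          · rw [v5, v2]
        · obtain ⟨m1, m2, m3⟩ := hmoves x (mem_compl.mpr hx)
          rw [vout x hx, vout _ (mem_compl.mp m1), m2]
      · intro x
        by_cases hx : x ∈ s
        · rw [← hset] at hx
          simp only [mem_insert, mem_singleton] at hx
          rcases hx with rfl | rfl | rfl | rfl | rfl | rfl
          · rw [v0]; exact (hlt 0 3 d03).ne'
          · rw [v1]; exact (hlt 1 4 d14).ne'
          · rw [v2]; exact (hlt 2 5 d25).ne'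
          · rw [v3]; exact (hlt 0 3 d03).ne
          · rw [v4]; exact (hlt 1 4 d14).ne
          · rw [v5]; exact (hlt 2 5 d25).ne
        · obtain ⟨m1, m2, m3⟩ := hmoves x (mem_compl.mpr hx)
          rw [vout x hx]; exact m3
    · rw [mem_filter]
      refine ⟨mem_univ _, ?_, ?_, ?_, ?_, ?_, ?_, ?_, ?_⟩
      · show e 0 < (τ * W) (e 0); rw [v0]; exact hlt 0 3 d03
      · show e 1 < (τ * W) (e 1); rw [v1]; exact hlt 1 4 d14
      · show e 2 < (τ * W) (e 2); rw [v2]; exact hlt 2 5 d25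
      · exact h01
      · exact h12
      · exact Or.inl ⟨h01, by rw [v0]; exact hlt 1 3 d13,
          by rw [v0, v1]; exact hlt 3 4 d34⟩
      · exact Or.inl ⟨h12, by rw [v1]; exact hlt 2 4 d24,
          by rw [v1, v2]; exact hlt 4 5 d45⟩
      · exact Or.inl ⟨h01.trans h12, by rw [v0]; exact hlt 2 3 d23,
          by rw [v0, v2]; exact hlt 3 5 d35⟩
  case right =>
    rintro ⟨s, τ⟩ hy
    have d01 : (0:Fin 6) < 1 := by decide
    have d12 : (1:Fin 6) < 2 := by decide
    have d23 : (2:Fin 6) < 3 := by decide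
    have d34 : (3:Fin 6) < 4 := by decide
    have d45 : (4:Fin 6) < 5 := by decide
    have d03 : (0:Fin 6) < 3 := by decide
    have d14 : (1:Fin 6) < 4 := by decide
    have d25 : (2:Fin 6) < 5 := by decide
    have d13 : (1:Fin 6) < 3 := by decide
    have d24 : (2:Fin 6) < 4 := by decide
    have d35 : (3:Fin 6) < 5 := by decide
    dsimp only
    generalize_proofs hcard6
    have hτ := (mem_sigma.mp hy).2
    simp only [ChordAux.invOn, mem_filter, mem_univ, true_and] at hτ
    obtain ⟨hfixs, hmoves⟩ := hτ
    set e := s.orderEmbOfFin hcard6 with he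
    have hlt : ∀ i j : Fin 6, i < j → e i < e j :=
      fun i j h => (s.orderEmbOfFin hcard6).strictMono h
    have hms : ∀ i, e i ∈ s := fun i => s.orderEmbOfFin_mem hcard6 i
    have hfix : ∀ x ∈ s, τ x = x := fun x hx => hfixs x (by simp [mem_compl, hx])
    have h01 := hlt 0 1 d01
    have h12 := hlt 1 2 d12
    have h23 := hlt 2 3 d23
    have h34 := hlt 3 4 d34
    have h45 := hlt 4 5 d45
    obtain ⟨w0, w1, w2, w3, w4, w5, wfix⟩ := w_spec h01 h12 h23 h34 h45
    have hset : ({e 0, e 1, e 2, e 3, e 4, e 5} : Finset (Fin (2 * p))) = s := by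
      apply Finset.eq_of_subset_of_card_le
      · intro x hx
        simp only [mem_insert, mem_singleton] at hx
        rcases hx with rfl | rfl | rfl | rfl | rfl | rfl <;> exact hms _
      · rw [hcard6, six_card h01 h12 h23 h34 h45]
    set W : Perm (Fin (2 * p)) := swap (e 0) (e 3) * swap (e 1) (e 4) * swap (e 2) (e 5) with hW
    have v0 : (τ * W) (e 0) = e 3 := by
      show τ (W (e 0)) = e 3
      rw [hW, w0]; exact hfix _ (hms 3)
    have v1 : (τ * W) (e 1) = e 4 := by
      show τ (W (e 1)) = e 4
      rw [hW, w1]; exact hfix _ (hms 4)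
    have v2 : (τ * W) (e 2) = e 5 := by
      show τ (W (e 2)) = e 5
      rw [hW, w2]; exact hfix _ (hms 5)
    have hWW : ∀ x, W (W x) = x := w_invol h01 h12 h23 h34 h45
    show (⟨{e 0, e 1, e 2, (τ * W) (e 0), (τ * W) (e 1), (τ * W) (e 2)},
        (τ * W) * (swap (e 0) ((τ * W) (e 0)) * swap (e 1) ((τ * W) (e 1)) *
          swap (e 2) ((τ * W) (e 2)))⟩ :
        (_ : Finset (Fin (2 * p))) × Perm (Fin (2 * p)))
      = ⟨s, τ⟩
    rw [v0, v1, v2]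
    have hτW : (τ * W) * (swap (e 0) (e 3) * swap (e 1) (e 4) * swap (e 2) (e 5)) = τ := by
      refine Equiv.ext fun x => ?_
      exact congrArg τ (hWW x)
    rw [hτW, hset]


/-- The total number of triangles in the intersection graphs of all chord diagrams
with `p` chords. -/
theorem total_triangles (p : ℕ) :
    (∑ σ ∈ chordDiagrams p, (triNum σ : ℚ)) =
      (1 / 15) * (p.choose 3) * (Nat.doubleFactorial (2 * p - 1)) := by
  rw [← ChordAux.final_arith p, ← main_count p]
  push_cast
  rfl
end

section
/- The signed triangle count over chord diagrams: Σ_{i=1}^{(2p-1)!!} (-1)^{E_i} T_i = -binom(p,3), where E_i and T_i are the number of edges and triangles of the intersection graph of the i-th chord diagram with p chords. -/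
open Finset

namespace SignedTri

variable {n : ℕ}

/-- crossing indicator in `ZMod 2` -/
def ind (σ : Equiv.Perm (Fin n)) (q : Fin n × Fin n) : ZMod 2 :=
  if q.1 < σ q.1 ∧ q.2 < σ q.2 ∧ q.1 < q.2 ∧ Cross σ q.1 q.2 then 1 else 0

lemma crossNum_cast (σ : Equiv.Perm (Fin n)) :
    ((crossNum σ : ZMod 2)) = ∑ x : Fin n, ∑ y : Fin n, ind σ (x, y) := by
  rw [crossNum, Finset.card_filter]
  push_cast
  rw [← Fintype.sum_prod_type']
  simp [ind, apply_ite (fun k : ℕ => (k : ZMod 2))]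

lemma pow_eq_of_parity {a b : ℕ} (h : (a : ZMod 2) = (b : ZMod 2)) :
    ((-1 : ℤ)) ^ a = (-1) ^ b := by
  have h2 : a % 2 = b % 2 := by
    have := (ZMod.natCast_eq_natCast_iff a b 2).mp h
    exact this
  rcases Nat.even_or_odd a with ha | ha
  · have hb : Even b := by rw [Nat.even_iff] at *; omega
    rw [ha.neg_one_pow, hb.neg_one_pow]
  · have hb : Odd b := by rw [Nat.odd_iff] at *; omega
    rw [ha.neg_one_pow, hb.neg_one_pow]

lemma pow_eq_of_parity' {a b : ℕ} (h : (a : ZMod 2) = (b : ZMod 2) + 1) :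
    ((-1 : ℤ)) ^ a = -(-1) ^ b := by
  have h' : (a : ZMod 2) = ((b + 1 : ℕ) : ZMod 2) := by push_cast; exact h
  rw [pow_eq_of_parity h', pow_succ]
  ring

lemma ite_parity2 (p q r s : Prop) [Decidable p] [Decidable q] [Decidable r] [Decidable s]
    (h : (p ↔ q) ↔ (r ↔ s)) :
    (if p then (1 : ZMod 2) else 0) + (if q then 1 else 0)
      = (if r then 1 else 0) + (if s then 1 else 0) := by
  by_cases hp : p <;> by_cases hq : q <;> by_cases hr : r <;> by_cases hs : s <;>
    simp [hp, hq, hr, hs] at h ⊢ <;> try decide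

lemma ite_parity1 (p q r : Prop) [Decidable p] [Decidable q] [Decidable r]
    (h : p ↔ ¬(q ↔ r)) :
    (if p then (1 : ZMod 2) else 0) = (if q then 1 else 0) + (if r then 1 else 0) := by
  by_cases hq : q <;> by_cases hr : r <;>
    simp [hq, hr] at h ⊢ <;> simp [h] <;> try decide

lemma cross_symm {σ : Equiv.Perm (Fin n)} {a b : Fin n} : Cross σ a b ↔ Cross σ b a := by
  unfold Cross; tauto

lemma ind_eq_zero₁ {σ : Equiv.Perm (Fin n)} {q : Fin n × Fin n} (h : ¬ q.1 < σ q.1) :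
    ind σ q = 0 := by
  rw [ind, if_neg]; rintro ⟨h1,-,-,-⟩; exact h h1

lemma ind_eq_zero₂ {σ : Equiv.Perm (Fin n)} {q : Fin n × Fin n} (h : ¬ q.2 < σ q.2) :
    ind σ q = 0 := by
  rw [ind, if_neg]; rintro ⟨-,h1,-,-⟩; exact h h1

lemma ind_eq_zero₃ {σ : Equiv.Perm (Fin n)} {q : Fin n × Fin n} (h : ¬ q.1 < q.2) :
    ind σ q = 0 := by
  rw [ind, if_neg]; rintro ⟨-,-,h1,-⟩; exact h h1

lemma expand (u v : Fin n) (huv : u ≠ v) (F : Fin n → Fin n → ZMod 2) :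
    ∑ x : Fin n, ∑ y : Fin n, F x y =
      F u u + F u v + F v u + F v v
      + ∑ x ∈ (Finset.univ.erase u).erase v, (F u x + F v x + F x u + F x v)
      + ∑ x ∈ (Finset.univ.erase u).erase v, ∑ y ∈ (Finset.univ.erase u).erase v, F x y := by
  set D := (Finset.univ.erase u).erase v with hD
  have hsplit : ∀ G : Fin n → ZMod 2, ∑ y : Fin n, G y = G u + G v + ∑ y ∈ D, G y := by
    intro G
    have h1 : ∑ y : Fin n, G y = G u + ∑ y ∈ Finset.univ.erase u, G y :=
      (Finset.add_sum_erase _ G (Finset.mem_univ u)).symm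
    have h2 : ∑ y ∈ Finset.univ.erase u, G y = G v + ∑ y ∈ D, G y :=
      (Finset.add_sum_erase _ G (by simp [Ne.symm huv])).symm
    rw [h1, h2]; ring
  rw [hsplit (fun x => ∑ y : Fin n, F x y)]

  rw [hsplit (fun y => F u y), hsplit (fun y => F v y)]
  have : ∑ x ∈ D, ∑ y : Fin n, F x y
      = ∑ x ∈ D, (F x u + F x v + ∑ y ∈ D, F x y) :=
    Finset.sum_congr rfl fun x _ => hsplit (fun y => F x y)
  rw [this]
  rw [Finset.sum_add_distrib, Finset.sum_add_distrib, Finset.sum_add_distrib,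
    Finset.sum_add_distrib, Finset.sum_add_distrib]
  ring

end SignedTri

namespace SignedTri

variable {n : ℕ}

lemma keyOmega (U V A B X S : ℕ) (h1 : U<V) (h2 : V<A) (h3 : V<B)
    (h5 : X<S) (d1 : X≠U) (d2 : X≠V) (d3 : X≠A) (d4 : X≠B)
    (d5 : S≠U) (d6 : S≠V) (d7 : S≠A) (d8 : S≠B) :
    ((((U<X∧X<B∧B<S) ∨ (X<U∧U<S∧S<B))) ↔ (((V<X∧X<A∧A<S)) ∨ (X<V∧V<S∧S<A))) ↔
    ((((U<X∧X<A∧A<S)) ∨ ((X<U∧U<S∧S<A))) ↔ (((V<X∧X<B∧B<S)) ∨ ((X<V∧V<S∧S<B)))) := by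
  omega

def swapConj (σ : Equiv.Perm (Fin n)) (u v : Fin n) : Equiv.Perm (Fin n) :=
  (Equiv.swap u v) * σ * (Equiv.swap u v)

lemma swapConj_apply (σ : Equiv.Perm (Fin n)) (u v x : Fin n) :
    swapConj σ u v x = Equiv.swap u v (σ (Equiv.swap u v x)) := rfl

lemma sc_u {σ : Equiv.Perm (Fin n)} {u v : Fin n} (huv : u < v) (hbv : v < σ v) :
    swapConj σ u v u = σ v := by
  rw [swapConj_apply, Equiv.swap_apply_left,
    Equiv.swap_apply_of_ne_of_ne (ne_of_gt (huv.trans hbv)) (ne_of_gt hbv)]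

lemma sc_v {σ : Equiv.Perm (Fin n)} {u v : Fin n} (huv : u < v) (hau : v < σ u) :
    swapConj σ u v v = σ u := by
  rw [swapConj_apply, Equiv.swap_apply_right,
    Equiv.swap_apply_of_ne_of_ne (ne_of_gt (huv.trans hau)) (ne_of_gt hau)]

lemma sc_other {σ : Equiv.Perm (Fin n)} {u v x : Fin n} (hxu : x ≠ u) (hxv : x ≠ v)
    (h1 : σ x ≠ u) (h2 : σ x ≠ v) : swapConj σ u v x = σ x := by
  rw [swapConj_apply, Equiv.swap_apply_of_ne_of_ne hxu hxv,
    Equiv.swap_apply_of_ne_of_ne h1 h2]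

lemma sc_su {σ : Equiv.Perm (Fin n)} {u v : Fin n} (hinv : ∀ x, σ (σ x) = x)
    (huv : u < v) (hau : v < σ u) : swapConj σ u v (σ u) = v := by
  rw [swapConj_apply,
    Equiv.swap_apply_of_ne_of_ne (ne_of_gt (huv.trans hau)) (ne_of_gt hau),
    hinv, Equiv.swap_apply_left]

lemma sc_sv {σ : Equiv.Perm (Fin n)} {u v : Fin n} (hinv : ∀ x, σ (σ x) = x)
    (huv : u < v) (hbv : v < σ v) : swapConj σ u v (σ v) = u := by
  rw [swapConj_apply,
    Equiv.swap_apply_of_ne_of_ne (ne_of_gt (huv.trans hbv)) (ne_of_gt hbv),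
    hinv, Equiv.swap_apply_right]

lemma ind_eq_of_all (τ : Equiv.Perm (Fin n)) {a b : Fin n}
    (h1 : a < τ a) (h2 : b < τ b) (h3 : a < b) :
    ind τ (a,b) = if Cross τ a b then (1 : ZMod 2) else 0 := by
  rw [ind]; by_cases hc : Cross τ a b
  · rw [if_pos ⟨h1,h2,h3,hc⟩, if_pos hc]
  · rw [if_neg (fun h => hc h.2.2.2), if_neg hc]

lemma four_sum (τ : Equiv.Perm (Fin n)) {u v : Fin n} (huv : u < v)
    (hu : u < τ u) (hv : v < τ v)
    {x : Fin n} (hx : x < τ x) (hxu : x ≠ u) (hxv : x ≠ v) :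
    ind τ (u,x) + ind τ (v,x) + ind τ (x,u) + ind τ (x,v)
      = (if Cross τ u x then (1 : ZMod 2) else 0) + (if Cross τ v x then 1 else 0) := by
  rcases lt_trichotomy x u with hord | hord | hord
  · have hxv' : x < v := hord.trans huv
    rw [ind_eq_zero₃ (q := (u,x)) (not_lt.2 hord.le),
      ind_eq_zero₃ (q := (v,x)) (not_lt.2 hxv'.le),
      ind_eq_of_all τ hx hu hord, ind_eq_of_all τ hx hv hxv',
      if_congr (cross_symm (σ := τ) (a := x) (b := u)) rfl rfl,
      if_congr (cross_symm (σ := τ) (a := x) (b := v)) rfl rfl]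
    ring
  · exact absurd hord hxu
  · rcases lt_trichotomy x v with hord2 | hord2 | hord2
    · rw [ind_eq_zero₃ (q := (x,u)) (not_lt.2 hord.le),
        ind_eq_zero₃ (q := (v,x)) (not_lt.2 hord2.le),
        ind_eq_of_all τ hu hx hord, ind_eq_of_all τ hx hv hord2,
        if_congr (cross_symm (σ := τ) (a := x) (b := v)) rfl rfl]
      ring
    · exact absurd hord2 hxv
    · rw [ind_eq_zero₃ (q := (x,u)) (not_lt.2 hord.le),
        ind_eq_zero₃ (q := (x,v)) (not_lt.2 hord2.le),
        ind_eq_of_all τ hu hx hord, ind_eq_of_all τ hv hx hord2]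
      ring

end SignedTri

namespace SignedTri

variable {n : ℕ}

lemma crossNum_swapConj {σ : Equiv.Perm (Fin n)} {u v : Fin n}
    (hinv : ∀ x, σ (σ x) = x) (huv : u < v) (hau : v < σ u) (hbv : v < σ v)
    (hab : σ u ≠ σ v) :
    ((crossNum (swapConj σ u v) : ZMod 2)) = (crossNum σ : ZMod 2) + 1 := by
  have hinj : ∀ {a b : Fin n}, σ a = σ b → a = b := by
    intro a b h; have := congrArg σ h; rwa [hinv, hinv] at this
  set σ' := swapConj σ u v with hσ'
  have hnuv : u ≠ v := ne_of_lt huv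
  have h'u : σ' u = σ v := sc_u huv hbv
  have h'v : σ' v = σ u := sc_v huv hau
  have h'su : σ' (σ u) = v := sc_su hinv huv hau
  have h'sv : σ' (σ v) = u := sc_sv hinv huv hbv
  have huσu : u < σ u := huv.trans hau
  have hvσ : v < σ v := hbv
  have huσ'u : u < σ' u := by rw [h'u]; exact huv.trans hbv
  have hvσ'v : v < σ' v := by rw [h'v]; exact hau
  rw [crossNum_cast, crossNum_cast, expand u v hnuv, expand u v hnuv]
  have z1 : ∀ τ : Equiv.Perm (Fin n), ind τ (u,u) = 0 :=
    fun τ => ind_eq_zero₃ (lt_irrefl u)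
  have z2 : ∀ τ : Equiv.Perm (Fin n), ind τ (v,v) = 0 :=
    fun τ => ind_eq_zero₃ (lt_irrefl v)
  have z3 : ∀ τ : Equiv.Perm (Fin n), ind τ (v,u) = 0 :=
    fun τ => ind_eq_zero₃ (not_lt.2 huv.le)
  have huvrel : ind σ' (u,v) = ind σ (u,v) + 1 := by
    have c1 : Cross σ u v ↔ σ u < σ v := by
      constructor
      · rintro (⟨-,-,h⟩ | ⟨h,-,-⟩)
        · exact h
        · exact absurd huv (not_lt.2 h.le)
      · intro h; exact Or.inl ⟨huv, hau, h⟩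
    have c2 : Cross σ' u v ↔ σ v < σ u := by
      rw [Cross, h'u, h'v]
      constructor
      · rintro (⟨-,-,h⟩ | ⟨h,-,-⟩)
        · exact h
        · exact absurd huv (not_lt.2 h.le)
      · intro h; exact Or.inl ⟨huv, hbv, h⟩
    have i1 : ind σ (u,v) = if σ u < σ v then (1:ZMod 2) else 0 := by
      rw [ind_eq_of_all σ huσu hvσ huv, if_congr c1 rfl rfl]
    have i2 : ind σ' (u,v) = if σ v < σ u then (1:ZMod 2) else 0 := by
      rw [ind_eq_of_all σ' huσ'u hvσ'v huv, if_congr c2 rfl rfl]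
    rcases lt_or_gt_of_ne hab with h | h
    · rw [i1, i2, if_pos h, if_neg (not_lt.2 h.le)]; decide
    · rw [i1, i2, if_neg (not_lt.2 h.le), if_pos h, zero_add]
  have K1 : ∀ x y : Fin n, x ≠ u → x ≠ v → y ≠ u → y ≠ v →
      ind σ' (x,y) = ind σ (x,y) := by
    intro x y hxu hxv hyu hyv
    by_cases hx1 : x = σ u
    · subst hx1
      rw [ind_eq_zero₁ (q := (σ u, y)) (by rw [h'su]; exact not_lt.2 hau.le),
        ind_eq_zero₁ (q := (σ u, y)) (by rw [hinv]; exact not_lt.2 huσu.le)]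
    by_cases hx2 : x = σ v
    · subst hx2
      rw [ind_eq_zero₁ (q := (σ v, y)) (by rw [h'sv]; exact not_lt.2 (huv.trans hbv).le),
        ind_eq_zero₁ (q := (σ v, y)) (by rw [hinv]; exact not_lt.2 hvσ.le)]
    by_cases hy1 : y = σ u
    · subst hy1
      rw [ind_eq_zero₂ (q := (x, σ u)) (by rw [h'su]; exact not_lt.2 hau.le),
        ind_eq_zero₂ (q := (x, σ u)) (by rw [hinv]; exact not_lt.2 huσu.le)]
    by_cases hy2 : y = σ v
    · subst hy2
      rw [ind_eq_zero₂ (q := (x, σ v)) (by rw [h'sv]; exact not_lt.2 (huv.trans hbv).le),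
        ind_eq_zero₂ (q := (x, σ v)) (by rw [hinv]; exact not_lt.2 hvσ.le)]
    have hsx : σ' x = σ x :=
      sc_other hxu hxv (fun h => hx1 (by rw [← hinv x, h])) (fun h => hx2 (by rw [← hinv x, h]))
    have hsy : σ' y = σ y :=
      sc_other hyu hyv (fun h => hy1 (by rw [← hinv y, h])) (fun h => hy2 (by rw [← hinv y, h]))
    simp only [ind]
    exact if_congr (by rw [Cross, Cross, hsx, hsy]) rfl rfl
  have K2 : ∀ x : Fin n, x ≠ u → x ≠ v →
      ind σ' (u,x) + ind σ' (v,x) + ind σ' (x,u) + ind σ' (x,v)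
        = ind σ (u,x) + ind σ (v,x) + ind σ (x,u) + ind σ (x,v) := by
    intro x hxu hxv
    by_cases hx1 : x = σ u
    · subst hx1
      rw [ind_eq_zero₂ (q := (u, σ u)) (by rw [h'su]; exact not_lt.2 hau.le),
        ind_eq_zero₂ (q := (v, σ u)) (by rw [h'su]; exact not_lt.2 hau.le),
        ind_eq_zero₁ (q := (σ u, u)) (by rw [h'su]; exact not_lt.2 hau.le),
        ind_eq_zero₁ (q := (σ u, v)) (by rw [h'su]; exact not_lt.2 hau.le),
        ind_eq_zero₂ (q := (u, σ u)) (by rw [hinv]; exact not_lt.2 huσu.le),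
        ind_eq_zero₂ (q := (v, σ u)) (by rw [hinv]; exact not_lt.2 huσu.le),
        ind_eq_zero₁ (q := (σ u, u)) (by rw [hinv]; exact not_lt.2 huσu.le),
        ind_eq_zero₁ (q := (σ u, v)) (by rw [hinv]; exact not_lt.2 huσu.le)]
    by_cases hx2 : x = σ v
    · subst hx2
      rw [ind_eq_zero₂ (q := (u, σ v)) (by rw [h'sv]; exact not_lt.2 (huv.trans hbv).le),
        ind_eq_zero₂ (q := (v, σ v)) (by rw [h'sv]; exact not_lt.2 (huv.trans hbv).le),
        ind_eq_zero₁ (q := (σ v, u)) (by rw [h'sv]; exact not_lt.2 (huv.trans hbv).le),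
        ind_eq_zero₁ (q := (σ v, v)) (by rw [h'sv]; exact not_lt.2 (huv.trans hbv).le),
        ind_eq_zero₂ (q := (u, σ v)) (by rw [hinv]; exact not_lt.2 hvσ.le),
        ind_eq_zero₂ (q := (v, σ v)) (by rw [hinv]; exact not_lt.2 hvσ.le),
        ind_eq_zero₁ (q := (σ v, u)) (by rw [hinv]; exact not_lt.2 hvσ.le),
        ind_eq_zero₁ (q := (σ v, v)) (by rw [hinv]; exact not_lt.2 hvσ.le)]
    have hσxu : σ x ≠ u := fun h => hx1 (by rw [← hinv x, h])
    have hσxv : σ x ≠ v := fun h => hx2 (by rw [← hinv x, h])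
    have hsx : σ' x = σ x := sc_other hxu hxv hσxu hσxv
    by_cases hx3 : x < σ x
    · rw [four_sum σ' huv huσ'u hvσ'v (by rw [hsx]; exact hx3) hxu hxv,
        four_sum σ huv huσu hvσ hx3 hxu hxv]
      apply ite_parity2
      rw [Cross, Cross, Cross, Cross, h'u, h'v, hsx]
      simp only [Fin.lt_def]
      exact keyOmega u.1 v.1 (σ u).1 (σ v).1 x.1 (σ x).1 huv hau hbv hx3
        (fun h => hxu (Fin.val_injective h)) (fun h => hxv (Fin.val_injective h))
        (fun h => hx1 (Fin.val_injective h)) (fun h => hx2 (Fin.val_injective h))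
        (fun h => hσxu (Fin.val_injective h)) (fun h => hσxv (Fin.val_injective h))
        (fun h => hxu (hinj (Fin.val_injective h))) (fun h => hxv (hinj (Fin.val_injective h)))
    · rw [ind_eq_zero₂ (q := (u, x)) (by rw [hsx]; exact hx3),
        ind_eq_zero₂ (q := (v, x)) (by rw [hsx]; exact hx3),
        ind_eq_zero₁ (q := (x, u)) (by rw [hsx]; exact hx3),
        ind_eq_zero₁ (q := (x, v)) (by rw [hsx]; exact hx3),
        ind_eq_zero₂ (q := (u, x)) hx3, ind_eq_zero₂ (q := (v, x)) hx3,
        ind_eq_zero₁ (q := (x, u)) hx3, ind_eq_zero₁ (q := (x, v)) hx3]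
  have e5 : ∑ x ∈ (Finset.univ.erase u).erase v,
      (ind σ' (u,x) + ind σ' (v,x) + ind σ' (x,u) + ind σ' (x,v))
      = ∑ x ∈ (Finset.univ.erase u).erase v,
      (ind σ (u,x) + ind σ (v,x) + ind σ (x,u) + ind σ (x,v)) := by
    refine Finset.sum_congr rfl fun x hx => ?_
    rw [Finset.mem_erase, Finset.mem_erase] at hx
    exact K2 x hx.2.1 hx.1
  have e6 : ∑ x ∈ (Finset.univ.erase u).erase v, ∑ y ∈ (Finset.univ.erase u).erase v,
      ind σ' (x,y)
      = ∑ x ∈ (Finset.univ.erase u).erase v, ∑ y ∈ (Finset.univ.erase u).erase v,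
      ind σ (x,y) := by
    refine Finset.sum_congr rfl fun x hx => Finset.sum_congr rfl fun y hy => ?_
    rw [Finset.mem_erase, Finset.mem_erase] at hx hy
    exact K1 x y hx.2.1 hx.1 hy.2.1 hy.1
  rw [z1, z1, z2, z2, z3, z3, huvrel, e5, e6]
  ring

end SignedTri

namespace SignedTri

variable {n : ℕ}

abbrev Tri (n : ℕ) := Fin n × Fin n × Fin n

def TriCond (σ : Equiv.Perm (Fin n)) (t : Tri n) : Prop :=
  t.1 < σ t.1 ∧ t.2.1 < σ t.2.1 ∧ t.2.2 < σ t.2.2 ∧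
  t.1 < t.2.1 ∧ t.2.1 < t.2.2 ∧
  Cross σ t.1 t.2.1 ∧ Cross σ t.2.1 t.2.2 ∧ Cross σ t.1 t.2.2

instance (σ : Equiv.Perm (Fin n)) (t : Tri n) : Decidable (TriCond σ t) := by
  unfold TriCond; infer_instance

lemma pattern {σ : Equiv.Perm (Fin n)} {t : Tri n} (h : TriCond σ t) :
    t.1 < t.2.1 ∧ t.2.1 < t.2.2 ∧ t.2.2 < σ t.1 ∧ σ t.1 < σ t.2.1 ∧ σ t.2.1 < σ t.2.2 := by
  obtain ⟨h1,h2,h3,h4,h5,c1,c2,c3⟩ := h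
  rw [Cross] at c1 c2 c3
  simp only [Fin.lt_def] at *
  omega

def Pset (z : Equiv.Perm (Fin n) × Tri n) : Finset (Fin n) :=
  {z.2.1, z.2.2.1, z.2.2.2, z.1 z.2.1, z.1 z.2.2.1, z.1 z.2.2.2}

lemma mem_Pset {z : Equiv.Perm (Fin n) × Tri n} {x : Fin n} :
    x ∈ Pset z ↔ x = z.2.1 ∨ x = z.2.2.1 ∨ x = z.2.2.2 ∨
      x = z.1 z.2.1 ∨ x = z.1 z.2.2.1 ∨ x = z.1 z.2.2.2 := by
  simp [Pset]

lemma notP_closed {z : Equiv.Perm (Fin n) × Tri n} (hinv : ∀ x, z.1 (z.1 x) = x)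
    {x : Fin n} (hx : x ∉ Pset z) : z.1 x ∉ Pset z := by
  intro hmem
  apply hx
  rw [mem_Pset] at hmem ⊢
  have hinj : ∀ {a b : Fin n}, z.1 a = z.1 b → a = b := by
    intro a b h; have := congrArg z.1 h; rwa [hinv, hinv] at this
  rcases hmem with h|h|h|h|h|h
  · exact Or.inr (Or.inr (Or.inr (Or.inl (by rw [← h, hinv]))))
  · exact Or.inr (Or.inr (Or.inr (Or.inr (Or.inl (by rw [← h, hinv])))))
  · exact Or.inr (Or.inr (Or.inr (Or.inr (Or.inr (by rw [← h, hinv])))))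
  · exact Or.inl (hinj h)
  · exact Or.inr (Or.inl (hinj h))
  · exact Or.inr (Or.inr (Or.inl (hinj h)))

def Bad (z : Equiv.Perm (Fin n) × Tri n) : Finset (Fin n) :=
  Finset.univ.filter (fun x => x ∉ Pset z ∧
    ∃ y, y ∉ Pset z ∧ ((x < y ∧ y < z.1 x) ∨ (z.1 x < y ∧ y < x)))

lemma mem_Bad {z : Equiv.Perm (Fin n) × Tri n} {x : Fin n} :
    x ∈ Bad z ↔ x ∉ Pset z ∧
      ∃ y, y ∉ Pset z ∧ ((x < y ∧ y < z.1 x) ∨ (z.1 x < y ∧ y < x)) := by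
  simp [Bad]

def Vset (z : Equiv.Perm (Fin n) × Tri n) (u : Fin n) : Finset (Fin n) :=
  Finset.univ.filter (fun y => y ∉ Pset z ∧ u < y)

lemma mem_Vset {z : Equiv.Perm (Fin n) × Tri n} {u y : Fin n} :
    y ∈ Vset z u ↔ y ∉ Pset z ∧ u < y := by simp [Vset]

lemma moved_facts {z : Equiv.Perm (Fin n) × Tri n} (hinv : ∀ x, z.1 (z.1 x) = x)
    (hnofix : ∀ x, z.1 x ≠ x) {u : Fin n}
    (humem' : u ∈ Bad z) (hmin : ∀ x ∈ Bad z, u ≤ x) :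
    u ∉ Pset z ∧ u < z.1 u ∧ ∃ y, y ∉ Pset z ∧ u < y ∧ y < z.1 u := by
  rw [mem_Bad] at humem'
  obtain ⟨huP, y0, hy0P, hy0⟩ := humem'
  have huσ : u < z.1 u := by
    rcases lt_or_gt_of_ne (hnofix u).symm with hlt | hgt
    · exact hlt
    · exfalso
      have hy : z.1 u < y0 ∧ y0 < u := by
        rcases hy0 with ⟨h1, h2⟩ | hh
        · exact absurd (h1.trans h2) (not_lt.2 hgt.le)
        · exact hh
      have hb : z.1 u ∈ Bad z := by
        rw [mem_Bad]
        refine ⟨notP_closed hinv huP, y0, hy0P, Or.inl ⟨hy.1, ?_⟩⟩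
        rw [hinv]; exact hy.2
      exact absurd (lt_of_le_of_lt (hmin _ hb) hgt) (lt_irrefl u)
  have hy0' : u < y0 ∧ y0 < z.1 u := by
    rcases hy0 with hh | ⟨h1, h2⟩
    · exact hh
    · exact absurd (h1.trans h2) (not_lt.2 huσ.le)
  exact ⟨huP, huσ, y0, hy0P, hy0'.1, hy0'.2⟩

lemma moved_facts2 {z : Equiv.Perm (Fin n) × Tri n} (hinv : ∀ x, z.1 (z.1 x) = x)
    (hnofix : ∀ x, z.1 x ≠ x) {u v : Fin n}
    (humem' : u ∈ Bad z) (hmin : ∀ x ∈ Bad z, u ≤ x)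
    (hvmem : v ∈ Vset z u) (hvmin : ∀ y ∈ Vset z u, v ≤ y) :
    u ∉ Pset z ∧ v ∉ Pset z ∧ u < v ∧ v < z.1 u ∧ v < z.1 v := by
  obtain ⟨huP, huσ, y0, hy0P, hy01, hy02⟩ := moved_facts hinv hnofix humem' hmin
  obtain ⟨hvP, huv⟩ := mem_Vset.1 hvmem
  have hvley : v ≤ y0 := hvmin _ (mem_Vset.2 ⟨hy0P, hy01⟩)
  have hvltσu : v < z.1 u := lt_of_le_of_lt hvley hy02
  have hσvP : z.1 v ∉ Pset z := notP_closed hinv hvP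
  refine ⟨huP, hvP, huv, hvltσu, ?_⟩
  rcases lt_trichotomy (z.1 v) v with hlt | heq | hgt
  · exfalso
    rcases lt_trichotomy (z.1 v) u with h1 | h1 | h1
    · have hb : z.1 v ∈ Bad z := by
        rw [mem_Bad]
        refine ⟨hσvP, u, huP, Or.inl ⟨h1, ?_⟩⟩
        rw [hinv]; exact huv
      exact absurd (lt_of_le_of_lt (hmin _ hb) h1) (lt_irrefl _)
    · have h2 : z.1 u = v := by rw [← h1, hinv]
      rw [h2] at hvltσu; exact lt_irrefl _ hvltσu
    · have h2 : z.1 v ∈ Vset z u := mem_Vset.2 ⟨hσvP, h1⟩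
      exact absurd (lt_of_le_of_lt (hvmin _ h2) hlt) (lt_irrefl _)
  · exact absurd heq (hnofix v)
  · exact hgt

lemma Vset_nonempty {z : Equiv.Perm (Fin n) × Tri n} (hinv : ∀ x, z.1 (z.1 x) = x)
    (hnofix : ∀ x, z.1 x ≠ x) {u : Fin n}
    (humem' : u ∈ Bad z) (hmin : ∀ x ∈ Bad z, u ≤ x) : (Vset z u).Nonempty := by
  obtain ⟨-, -, y0, hy0P, hy01, -⟩ := moved_facts hinv hnofix humem' hmin
  exact ⟨y0, mem_Vset.2 ⟨hy0P, hy01⟩⟩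

end SignedTri

namespace SignedTri

variable {n : ℕ}

def pairSet (n : ℕ) : Finset (Equiv.Perm (Fin n) × Tri n) :=
  Finset.univ.filter (fun z => IsChordDiagram z.1 ∧ TriCond z.1 z.2)

def uO (z : Equiv.Perm (Fin n) × Tri n) : Fin n :=
  if h : (Bad z).Nonempty then (Bad z).min' h else z.2.1

def vO (z : Equiv.Perm (Fin n) × Tri n) : Fin n :=
  if h : (Vset z (uO z)).Nonempty then (Vset z (uO z)).min' h else z.2.1

def mv (z : Equiv.Perm (Fin n) × Tri n) : Equiv.Perm (Fin n) × Tri n :=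
  (swapConj z.1 (uO z) (vO z), z.2)

lemma uO_spec {z : Equiv.Perm (Fin n) × Tri n} (h : (Bad z).Nonempty) :
    uO z ∈ Bad z ∧ ∀ x ∈ Bad z, uO z ≤ x := by
  rw [uO, dif_pos h]
  exact ⟨Finset.min'_mem _ _, fun x hx => Finset.min'_le _ _ hx⟩

lemma vO_spec {z : Equiv.Perm (Fin n) × Tri n} (h : (Vset z (uO z)).Nonempty) :
    vO z ∈ Vset z (uO z) ∧ ∀ y ∈ Vset z (uO z), vO z ≤ y := by
  rw [vO, dif_pos h]
  exact ⟨Finset.min'_mem _ _, fun x hx => Finset.min'_le _ _ hx⟩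

lemma mv_master {z : Equiv.Perm (Fin n) × Tri n} (hicd : IsChordDiagram z.1)
    (htc : TriCond z.1 z.2) (hne : (Bad z).Nonempty) :
    (IsChordDiagram (mv z).1 ∧ TriCond (mv z).1 (mv z).2) ∧ (Bad (mv z)).Nonempty ∧
    mv (mv z) = z ∧ mv z ≠ z ∧
    ((-1:ℤ) ^ crossNum z.1) + ((-1:ℤ) ^ crossNum (mv z).1) = 0 := by
  obtain ⟨hinv, hnofix⟩ := hicd
  have hinj : ∀ {a b : Fin n}, z.1 a = z.1 b → a = b := by
    intro a b h; have := congrArg z.1 h; rwa [hinv, hinv] at this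
  obtain ⟨huB, humin⟩ := uO_spec hne
  have hvne : (Vset z (uO z)).Nonempty := Vset_nonempty hinv hnofix huB humin
  obtain ⟨hvV, hvmin⟩ := vO_spec hvne
  obtain ⟨huP, hvP, huv, hau, hbv⟩ := moved_facts2 hinv hnofix huB humin hvV hvmin
  set σ := z.1 with hσdef
  set t := z.2 with htdef
  set u := uO z with hudef
  set v := vO z with hvdef
  have hab : σ u ≠ σ v := fun h => (ne_of_lt huv) (hinj h)
  have hσuP : σ u ∉ Pset z := notP_closed hinv huP
  have hσvP : σ v ∉ Pset z := notP_closed hinv hvP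
  -- membership of triangle points in Pset
  have ht1 : t.1 ∈ Pset z := mem_Pset.2 (Or.inl rfl)
  have ht2 : t.2.1 ∈ Pset z := mem_Pset.2 (Or.inr (Or.inl rfl))
  have ht3 : t.2.2 ∈ Pset z := mem_Pset.2 (Or.inr (Or.inr (Or.inl rfl)))
  have hs1 : σ t.1 ∈ Pset z := mem_Pset.2 (Or.inr (Or.inr (Or.inr (Or.inl rfl))))
  have hs2 : σ t.2.1 ∈ Pset z := mem_Pset.2 (Or.inr (Or.inr (Or.inr (Or.inr (Or.inl rfl)))))
  have hs3 : σ t.2.2 ∈ Pset z := mem_Pset.2 (Or.inr (Or.inr (Or.inr (Or.inr (Or.inr rfl)))))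
  have hneu : ∀ {x : Fin n}, x ∈ Pset z → x ≠ u ∧ x ≠ v :=
    fun hx => ⟨fun h => huP (h ▸ hx), fun h => hvP (h ▸ hx)⟩
  have et1 : swapConj σ u v t.1 = σ t.1 :=
    sc_other (hneu ht1).1 (hneu ht1).2 (hneu hs1).1 (hneu hs1).2
  have et2 : swapConj σ u v t.2.1 = σ t.2.1 :=
    sc_other (hneu ht2).1 (hneu ht2).2 (hneu hs2).1 (hneu hs2).2
  have et3 : swapConj σ u v t.2.2 = σ t.2.2 :=
    sc_other (hneu ht3).1 (hneu ht3).2 (hneu hs3).1 (hneu hs3).2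
  have hmv1 : (mv z).1 = swapConj σ u v := rfl
  have hmv2 : (mv z).2 = t := rfl
  -- chord diagram
  have hinv' : ∀ x, swapConj σ u v (swapConj σ u v x) = x := by
    intro x
    rw [swapConj_apply, swapConj_apply, Equiv.swap_apply_self, hinv, Equiv.swap_apply_self]
  have hnofix' : ∀ x, swapConj σ u v x ≠ x := by
    intro x h
    apply hnofix (Equiv.swap u v x)
    have h2 := congrArg (Equiv.swap u v) h
    rw [swapConj_apply, Equiv.swap_apply_self] at h2
    exact h2
  have hicd' : IsChordDiagram (mv z).1 := ⟨hinv', hnofix'⟩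
  -- TriCond
  obtain ⟨c1,c2,c3,c4,c5,x1,x2,x3⟩ := htc
  have htc' : TriCond (mv z).1 (mv z).2 := by
    rw [hmv1, hmv2]
    refine ⟨?_, ?_, ?_, c4, c5, ?_, ?_, ?_⟩
    · rw [et1]; exact c1
    · rw [et2]; exact c2
    · rw [et3]; exact c3
    · rw [Cross, et1, et2]; exact x1
    · rw [Cross, et2, et3]; exact x2
    · rw [Cross, et1, et3]; exact x3
  -- Pset preserved
  have hPeq : Pset (mv z) = Pset z := by
    rw [Pset, Pset, hmv1, hmv2, et1, et2, et3]
  -- u is in Bad (mv z)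
  have huB' : u ∈ Bad (mv z) := by
    rw [mem_Bad, hPeq, hmv1]
    exact ⟨huP, v, hvP, Or.inl ⟨huv, by rw [sc_u huv hbv]; exact hbv⟩⟩
  have hne' : (Bad (mv z)).Nonempty := ⟨u, huB'⟩
  -- nothing smaller than u is in Bad (mv z)
  have hnosmaller : ∀ x ∈ Bad (mv z), u ≤ x := by
    intro x hx
    by_contra hlt
    push_neg at hlt
    rw [mem_Bad, hPeq, hmv1] at hx
    obtain ⟨hxP, y, hyP, hy⟩ := hx
    have hsc : swapConj σ u v x = σ x := by
      refine sc_other (ne_of_lt hlt) (ne_of_lt (hlt.trans huv)) ?_ ?_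
      · intro h
        have : x = σ u := by rw [← hinv x, h]
        rw [this] at hlt
        exact absurd (hlt.trans (huv.trans hau)) (lt_irrefl _)
      · intro h
        have : x = σ v := by rw [← hinv x, h]
        rw [this] at hlt
        exact absurd (hlt.trans (huv.trans hbv)) (lt_irrefl _)
    rw [hsc] at hy
    have hxB : x ∈ Bad z := mem_Bad.2 ⟨hxP, y, hyP, hy⟩
    exact absurd (lt_of_le_of_lt (humin x hxB) hlt) (lt_irrefl _)
  have huO' : uO (mv z) = u := by
    obtain ⟨hm, hmin'⟩ := uO_spec hne'
    exact le_antisymm (hmin' u huB') (hnosmaller _ hm)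
  have hVeq : Vset (mv z) (uO (mv z)) = Vset z u := by
    rw [huO']
    ext y
    rw [mem_Vset, mem_Vset, hPeq]
  have hvne' : (Vset (mv z) (uO (mv z))).Nonempty := by rw [hVeq]; exact ⟨v, hvV⟩
  have hvO' : vO (mv z) = v := by
    obtain ⟨hm, hmin'⟩ := vO_spec hvne'
    rw [hVeq] at hm hmin'
    exact le_antisymm (hmin' v hvV) (hvmin _ hm)
  -- involution
  have hmvmv : mv (mv z) = z := by
    have : mv (mv z) = (swapConj (swapConj σ u v) u v, t) := by
      rw [mv, huO', hvO', hmv1, hmv2]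
    rw [this]
    have hfst : swapConj (swapConj σ u v) u v = σ := by
      ext x
      rw [swapConj_apply, swapConj_apply, Equiv.swap_apply_self, Equiv.swap_apply_self]
    rw [hfst]
  -- not fixed
  have hmvne : mv z ≠ z := by
    intro h
    have h2 := congrArg (fun w : Equiv.Perm (Fin n) × Tri n => w.1 u) h
    simp only [hmv1] at h2
    rw [sc_u huv hbv] at h2
    exact hab h2.symm
  -- sign
  have hsign : ((-1:ℤ) ^ crossNum z.1) + ((-1:ℤ) ^ crossNum (mv z).1) = 0 := by
    have hpar := crossNum_swapConj hinv huv hau hbv hab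
    have := pow_eq_of_parity' hpar
    rw [hmv1, this]
    ring
  exact ⟨⟨hicd', htc'⟩, hne', hmvmv, hmvne, hsign⟩

lemma sum_Mov :
    ∑ z ∈ (pairSet n).filter (fun z => (Bad z).Nonempty), ((-1:ℤ) ^ crossNum z.1) = 0 := by
  have hmem : ∀ z ∈ (pairSet n).filter (fun z => (Bad z).Nonempty),
      IsChordDiagram z.1 ∧ TriCond z.1 z.2 ∧ (Bad z).Nonempty := by
    intro z hz
    rw [Finset.mem_filter] at hz
    have h1 := hz.1
    simp only [pairSet, Finset.mem_filter] at h1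
    exact ⟨h1.2.1, h1.2.2, hz.2⟩
  refine Finset.sum_involution (fun z _ => mv z) ?_ ?_ ?_ ?_
  · intro z hz
    obtain ⟨h1, h2, h3⟩ := hmem z hz
    exact (mv_master h1 h2 h3).2.2.2.2
  · intro z hz _
    obtain ⟨h1, h2, h3⟩ := hmem z hz
    exact (mv_master h1 h2 h3).2.2.2.1
  · intro z hz
    obtain ⟨h1, h2, h3⟩ := hmem z hz
    obtain ⟨⟨hicd', htc'⟩, hne', -, -, -⟩ := mv_master h1 h2 h3
    simp only [pairSet, Finset.mem_filter]
    exact ⟨⟨Finset.mem_univ _, hicd', htc'⟩, hne'⟩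
  · intro z hz
    obtain ⟨h1, h2, h3⟩ := hmem z hz
    exact (mv_master h1 h2 h3).2.2.1

end SignedTri

namespace SignedTri

variable {N : ℕ}

def flip2 {m : ℕ} (j : Fin (2*m)) : Fin (2*m) :=
  ⟨if j.val % 2 = 0 then j.val + 1 else j.val - 1, by
    rcases j with ⟨jv, hj⟩; dsimp; split <;> omega⟩

lemma flip2_val {m : ℕ} (j : Fin (2*m)) :
    (flip2 j).val = if j.val % 2 = 0 then j.val + 1 else j.val - 1 := rfl

lemma flip2_flip2 {m : ℕ} (j : Fin (2*m)) : flip2 (flip2 j) = j := by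
  apply Fin.ext
  rcases j with ⟨jv, hj⟩
  simp only [flip2_val]
  split <;> split <;> omega

lemma flip2_ne {m : ℕ} (j : Fin (2*m)) : flip2 j ≠ j := by
  intro h
  have := congrArg Fin.val h
  rw [flip2_val] at this
  split at this <;> omega

section Construction

variable (P : Finset (Fin N)) (h6 : P.card = 6) {m : ℕ}
  (hQ : (Finset.univ \ P).card = 2*m)

def canonF : Fin N → Fin N := fun x =>
  if hx : x ∈ P then ((P.orderIsoOfFin h6) ((P.orderIsoOfFin h6).symm ⟨x, hx⟩ + 3)).1
  else (((Finset.univ \ P).orderIsoOfFin hQ)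
    (flip2 (((Finset.univ \ P).orderIsoOfFin hQ).symm
      ⟨x, Finset.mem_sdiff.2 ⟨Finset.mem_univ x, hx⟩⟩))).1

lemma canonF_mem (i : Fin 6) : ((P.orderIsoOfFin h6) i).1 ∈ P :=
  ((P.orderIsoOfFin h6) i).2

lemma canonF_qmem (j : Fin (2*m)) :
    (((Finset.univ \ P).orderIsoOfFin hQ) j).1 ∉ P := by
  have := (((Finset.univ \ P).orderIsoOfFin hQ) j).2
  rw [Finset.mem_sdiff] at this
  exact this.2

lemma canonF_mono (i : Fin 6) :
    canonF P h6 hQ ((P.orderIsoOfFin h6) i).1 = ((P.orderIsoOfFin h6) (i + 3)).1 := by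
  rw [canonF, dif_pos (canonF_mem P h6 i)]
  congr 2
  rw [Subtype.coe_eta, OrderIso.symm_apply_apply]

lemma canonF_q (j : Fin (2*m)) :
    canonF P h6 hQ (((Finset.univ \ P).orderIsoOfFin hQ) j).1
      = (((Finset.univ \ P).orderIsoOfFin hQ) (flip2 j)).1 := by
  rw [canonF, dif_neg (canonF_qmem P hQ j)]
  congr 2
  rw [Subtype.coe_eta, OrderIso.symm_apply_apply]

lemma canonF_invol : Function.Involutive (canonF P h6 hQ) := by
  intro x
  by_cases hx : x ∈ P
  · have hx1 : x = ((P.orderIsoOfFin h6) ((P.orderIsoOfFin h6).symm ⟨x, hx⟩)).1 := by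
      rw [OrderIso.apply_symm_apply]
    rw [hx1, canonF_mono, canonF_mono]
    congr 1
    have : ∀ i : Fin 6, i + 3 + 3 = i := by decide
    rw [this]
  · have hx1 : x = (((Finset.univ \ P).orderIsoOfFin hQ)
        (((Finset.univ \ P).orderIsoOfFin hQ).symm
          ⟨x, Finset.mem_sdiff.2 ⟨Finset.mem_univ x, hx⟩⟩)).1 := by
      rw [OrderIso.apply_symm_apply]
    rw [hx1, canonF_q, canonF_q, flip2_flip2]

def canonPerm : Equiv.Perm (Fin N) := (canonF_invol P h6 hQ).toPerm

lemma canonPerm_apply (x : Fin N) : canonPerm P h6 hQ x = canonF P h6 hQ x := rfl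

lemma mono_lt_iff (i j : Fin 6) :
    ((P.orderIsoOfFin h6) i).1 < ((P.orderIsoOfFin h6) j).1 ↔ i < j := by
  exact (Subtype.coe_lt_coe).trans (OrderIso.lt_iff_lt _)

lemma qiso_lt_iff (j k : Fin (2*m)) :
    (((Finset.univ \ P).orderIsoOfFin hQ) j).1 < (((Finset.univ \ P).orderIsoOfFin hQ) k).1
      ↔ j < k := by
  exact (Subtype.coe_lt_coe).trans (OrderIso.lt_iff_lt _)

def zOfP : Equiv.Perm (Fin N) × Tri N :=
  (canonPerm P h6 hQ,
    (((P.orderIsoOfFin h6) 0).1, ((P.orderIsoOfFin h6) 1).1, ((P.orderIsoOfFin h6) 2).1))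

lemma zOfP_icd : IsChordDiagram (zOfP P h6 hQ).1 := by
  constructor
  · intro x; exact canonF_invol P h6 hQ x
  · intro x h
    replace h : canonF P h6 hQ x = x := h
    by_cases hx : x ∈ P
    · have hx1 : x = ((P.orderIsoOfFin h6) ((P.orderIsoOfFin h6).symm ⟨x, hx⟩)).1 := by
        rw [OrderIso.apply_symm_apply]
      rw [hx1, canonF_mono] at h
      have h2 : ((P.orderIsoOfFin h6).symm ⟨x, hx⟩) + 3 = ((P.orderIsoOfFin h6).symm ⟨x, hx⟩) := by
        apply_fun (P.orderIsoOfFin h6)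
        apply Subtype.ext
        rw [← hx1] at h
        exact h.trans hx1
      revert h2
      generalize ((P.orderIsoOfFin h6).symm ⟨x, hx⟩) = i
      revert i
      decide
    · have hx1 : x = (((Finset.univ \ P).orderIsoOfFin hQ)
          (((Finset.univ \ P).orderIsoOfFin hQ).symm
            ⟨x, Finset.mem_sdiff.2 ⟨Finset.mem_univ x, hx⟩⟩)).1 := by
        rw [OrderIso.apply_symm_apply]
      rw [hx1, canonF_q] at h
      have h2 : flip2 (((Finset.univ \ P).orderIsoOfFin hQ).symm
          ⟨x, Finset.mem_sdiff.2 ⟨Finset.mem_univ x, hx⟩⟩)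
          = (((Finset.univ \ P).orderIsoOfFin hQ).symm
          ⟨x, Finset.mem_sdiff.2 ⟨Finset.mem_univ x, hx⟩⟩) := by
        apply_fun ((Finset.univ \ P).orderIsoOfFin hQ)
        apply Subtype.ext
        rw [← hx1] at h
        exact h.trans hx1
      exact flip2_ne _ h2
  
lemma zOfP_tri : TriCond (zOfP P h6 hQ).1 (zOfP P h6 hQ).2 := by
  have e0 : (zOfP P h6 hQ).1 ((P.orderIsoOfFin h6) 0).1 = ((P.orderIsoOfFin h6) 3).1 := by
    rw [zOfP, canonPerm_apply, canonF_mono]; norm_num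
  have e1 : (zOfP P h6 hQ).1 ((P.orderIsoOfFin h6) 1).1 = ((P.orderIsoOfFin h6) 4).1 := by
    rw [zOfP, canonPerm_apply, canonF_mono]; norm_num; decide
  have e2 : (zOfP P h6 hQ).1 ((P.orderIsoOfFin h6) 2).1 = ((P.orderIsoOfFin h6) 5).1 := by
    rw [zOfP, canonPerm_apply, canonF_mono]; norm_num; decide
  refine ⟨?_, ?_, ?_, ?_, ?_, ?_, ?_, ?_⟩
  · rw [zOfP] at e0 ⊢; rw [e0, mono_lt_iff]; decide
  · rw [zOfP] at e1 ⊢; rw [e1, mono_lt_iff]; decide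
  · rw [zOfP] at e2 ⊢; rw [e2, mono_lt_iff]; decide
  · rw [zOfP]; simp only; rw [mono_lt_iff]; decide
  · rw [zOfP]; simp only; rw [mono_lt_iff]; decide
  · rw [zOfP] at e0 e1 ⊢
    exact Or.inl ⟨(mono_lt_iff P h6 0 1).2 (by decide),
      by rw [e0, mono_lt_iff]; decide,
      by rw [e0, e1, mono_lt_iff]; decide⟩
  · rw [zOfP] at e1 e2 ⊢
    exact Or.inl ⟨(mono_lt_iff P h6 1 2).2 (by decide),
      by rw [e1, mono_lt_iff]; decide,
      by rw [e1, e2, mono_lt_iff]; decide⟩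
  · rw [zOfP] at e0 e2 ⊢
    exact Or.inl ⟨(mono_lt_iff P h6 0 2).2 (by decide),
      by rw [e0, mono_lt_iff]; decide,
      by rw [e0, e2, mono_lt_iff]; decide⟩

lemma zOfP_Pset : Pset (zOfP P h6 hQ) = P := by
  have e0 : (zOfP P h6 hQ).1 ((P.orderIsoOfFin h6) 0).1 = ((P.orderIsoOfFin h6) 3).1 := by
    rw [zOfP, canonPerm_apply, canonF_mono]; norm_num
  have e1 : (zOfP P h6 hQ).1 ((P.orderIsoOfFin h6) 1).1 = ((P.orderIsoOfFin h6) 4).1 := by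
    rw [zOfP, canonPerm_apply, canonF_mono]; norm_num; decide
  have e2 : (zOfP P h6 hQ).1 ((P.orderIsoOfFin h6) 2).1 = ((P.orderIsoOfFin h6) 5).1 := by
    rw [zOfP, canonPerm_apply, canonF_mono]; norm_num; decide
  ext x
  rw [mem_Pset]
  constructor
  · rintro (h|h|h|h|h|h) <;> rw [h]
    · exact canonF_mem P h6 0
    · exact canonF_mem P h6 1
    · exact canonF_mem P h6 2
    · rw [zOfP] at e0 ⊢; rw [e0]; exact canonF_mem P h6 3
    · rw [zOfP] at e1 ⊢; rw [e1]; exact canonF_mem P h6 4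
    · rw [zOfP] at e2 ⊢; rw [e2]; exact canonF_mem P h6 5
  · intro hx
    have hx1 : x = ((P.orderIsoOfFin h6) ((P.orderIsoOfFin h6).symm ⟨x, hx⟩)).1 := by
      rw [OrderIso.apply_symm_apply]
    set i := (P.orderIsoOfFin h6).symm ⟨x, hx⟩ with hi
    rw [zOfP] at e0 e1 e2 ⊢
    simp only
    have hc : i = 0 ∨ i = 1 ∨ i = 2 ∨ i = 3 ∨ i = 4 ∨ i = 5 := by
      rcases i with ⟨iv, hiv⟩
      interval_cases iv <;> simp
    rcases hc with h|h|h|h|h|h <;> rw [h] at hx1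
    · exact Or.inl hx1
    · exact Or.inr (Or.inl hx1)
    · exact Or.inr (Or.inr (Or.inl hx1))
    · exact Or.inr (Or.inr (Or.inr (Or.inl (by rw [e0]; exact hx1))))
    · exact Or.inr (Or.inr (Or.inr (Or.inr (Or.inl (by rw [e1]; exact hx1)))))
    · exact Or.inr (Or.inr (Or.inr (Or.inr (Or.inr (by rw [e2]; exact hx1)))))

lemma zOfP_fixed : Bad (zOfP P h6 hQ) = ∅ := by
  rw [Finset.eq_empty_iff_forall_notMem]
  intro x hx
  rw [mem_Bad, zOfP_Pset] at hx
  obtain ⟨hxP, y, hyP, hy⟩ := hx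
  have hx1 : x = (((Finset.univ \ P).orderIsoOfFin hQ)
      (((Finset.univ \ P).orderIsoOfFin hQ).symm
        ⟨x, Finset.mem_sdiff.2 ⟨Finset.mem_univ x, hxP⟩⟩)).1 := by
    rw [OrderIso.apply_symm_apply]
  have hy1 : y = (((Finset.univ \ P).orderIsoOfFin hQ)
      (((Finset.univ \ P).orderIsoOfFin hQ).symm
        ⟨y, Finset.mem_sdiff.2 ⟨Finset.mem_univ y, hyP⟩⟩)).1 := by
    rw [OrderIso.apply_symm_apply]
  set j := ((Finset.univ \ P).orderIsoOfFin hQ).symm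
      ⟨x, Finset.mem_sdiff.2 ⟨Finset.mem_univ x, hxP⟩⟩ with hjdef
  set k := ((Finset.univ \ P).orderIsoOfFin hQ).symm
      ⟨y, Finset.mem_sdiff.2 ⟨Finset.mem_univ y, hyP⟩⟩ with hkdef
  have hτ : (zOfP P h6 hQ).1 x = (((Finset.univ \ P).orderIsoOfFin hQ) (flip2 j)).1 := by
    conv_lhs => rw [hx1]
    rw [zOfP, canonPerm_apply, canonF_q]
  rw [hτ] at hy
  rcases hy with ⟨ha, hb⟩ | ⟨ha, hb⟩
  · rw [hx1] at ha; rw [hy1] at ha hb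
    rw [qiso_lt_iff] at ha hb
    have h1 : j.val < k.val := ha
    have h2 : k.val < (flip2 j).val := hb
    rw [flip2_val] at h2
    split at h2 <;> omega
  · rw [hx1] at hb; rw [hy1] at ha hb
    rw [qiso_lt_iff] at ha hb
    have h1 : k.val < j.val := hb
    have h2 : (flip2 j).val < k.val := ha
    rw [flip2_val] at h2
    split at h2 <;> omega

end Construction

end SignedTri

namespace SignedTri

variable {N : ℕ}

lemma good_unique {σ τ : Equiv.Perm (Fin N)} {P : Finset (Fin N)}
    (hσinv : ∀ x, σ (σ x) = x) (hτinv : ∀ x, τ (τ x) = x)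
    (hσno : ∀ x, σ x ≠ x) (hτno : ∀ x, τ x ≠ x)
    (hσP : ∀ x, x ∉ P → σ x ∉ P) (hτP : ∀ x, x ∉ P → τ x ∉ P)
    (hσgood : ∀ x, x ∉ P → ∀ y, y ∉ P → ¬((x < y ∧ y < σ x) ∨ (σ x < y ∧ y < x)))
    (hτgood : ∀ x, x ∉ P → ∀ y, y ∉ P → ¬((x < y ∧ y < τ x) ∨ (τ x < y ∧ y < x))) :
    ∀ x, x ∉ P → σ x = τ x := by
  suffices h : ∀ k : ℕ, ∀ x : Fin N, x ∉ P → x.val < k → σ x = τ x by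
    intro x hx
    exact h (x.val + 1) x hx (Nat.lt_succ_self _)
  intro k
  induction k with
  | zero => intro x _ h; exact absurd h (Nat.not_lt_zero _)
  | succ k ih =>
    intro x hx hlt
    rcases lt_trichotomy (σ x) x with hσlt | heq | hσgt
    · -- σ x < x
      have hw : σ x ∉ P := hσP x hx
      have hwk : (σ x).val < k := by
        have := Fin.lt_def.1 hσlt; omega
      have h1 : σ (σ x) = τ (σ x) := ih (σ x) hw hwk
      rw [hσinv] at h1
      have h2 := congrArg τ h1
      rw [hτinv] at h2
      exact h2.symm
    · exact absurd heq (hσno x)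
    · rcases lt_trichotomy (τ x) x with hτlt | heq | hτgt
      · have hw : τ x ∉ P := hτP x hx
        have hwk : (τ x).val < k := by
          have := Fin.lt_def.1 hτlt; omega
        have h1 : σ (τ x) = τ (τ x) := ih (τ x) hw hwk
        rw [hτinv] at h1
        have h2 := congrArg σ h1
        rw [hσinv] at h2
        exact h2.symm
      · exact absurd heq (hτno x)
      · rcases lt_trichotomy (σ x) (τ x) with h | h | h
        · exact absurd (Or.inl ⟨hσgt, h⟩) (hτgood x hx (σ x) (hσP x hx))
        · exact h
        · exact absurd (Or.inl ⟨hτgt, h⟩) (hσgood x hx (τ x) (hτP x hx))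

lemma fixed_eq_zOfP {z : Equiv.Perm (Fin N) × Tri N}
    (hicd : IsChordDiagram z.1) (htc : TriCond z.1 z.2) (hfix : Bad z = ∅)
    (h6 : (Pset z).card = 6) {m : ℕ} (hQ : (Finset.univ \ (Pset z)).card = 2*m) :
    zOfP (Pset z) h6 hQ = z := by
  obtain ⟨hinv, hnofix⟩ := hicd
  have pat := pattern htc
  simp only [Fin.lt_def] at pat
  obtain ⟨p1, p2, p3, p4, p5⟩ := pat
  set a : Fin 6 → Fin N := fun i =>
    if i.val = 0 then z.2.1 else if i.val = 1 then z.2.2.1 else if i.val = 2 then z.2.2.2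
    else if i.val = 3 then z.1 z.2.1 else if i.val = 4 then z.1 z.2.2.1 else z.1 z.2.2.2
    with ha
  have v0 : ((0 : Fin 6) : ℕ) = 0 := rfl
  have v1 : ((1 : Fin 6) : ℕ) = 1 := rfl
  have v2 : ((2 : Fin 6) : ℕ) = 2 := rfl
  have v3 : ((3 : Fin 6) : ℕ) = 3 := rfl
  have v4 : ((4 : Fin 6) : ℕ) = 4 := rfl
  have v5 : ((5 : Fin 6) : ℕ) = 5 := rfl
  have w0 : ((0 : Fin 5) : ℕ) = 0 := rfl
  have w1 : ((1 : Fin 5) : ℕ) = 1 := rfl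
  have w2 : ((2 : Fin 5) : ℕ) = 2 := rfl
  have w3 : ((3 : Fin 5) : ℕ) = 3 := rfl
  have w4 : ((4 : Fin 5) : ℕ) = 4 := rfl
  have hfs : ∀ x, a x ∈ Pset z := by
    intro x
    fin_cases x <;> simp [ha, mem_Pset, v0, v1, v2, v3, v4, v5]
  have hmono : StrictMono a := by
    intro i j hij
    have hij' : i.val < j.val := hij
    rcases i with ⟨iv, hi⟩
    rcases j with ⟨jv, hj⟩
    rw [Fin.lt_def]
    simp only [ha, Fin.val_mk]
    interval_cases iv <;> interval_cases jv <;> simp at hij' ⊢ <;> omega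
  have key := Finset.orderEmbOfFin_unique h6 hfs hmono
  have keyv : ∀ i : Fin 6, (((Pset z).orderIsoOfFin h6) i).1 = a i := by
    intro i
    rw [Finset.coe_orderIsoOfFin_apply, ← key]
  have e0 : (((Pset z).orderIsoOfFin h6) 0).1 = z.2.1 := keyv 0
  have e1 : (((Pset z).orderIsoOfFin h6) 1).1 = z.2.2.1 := keyv 1
  have e2 : (((Pset z).orderIsoOfFin h6) 2).1 = z.2.2.2 := keyv 2
  have e3 : (((Pset z).orderIsoOfFin h6) 3).1 = z.1 z.2.1 := keyv 3
  have e4 : (((Pset z).orderIsoOfFin h6) 4).1 = z.1 z.2.2.1 := keyv 4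
  have e5 : (((Pset z).orderIsoOfFin h6) 5).1 = z.1 z.2.2.2 := keyv 5
  -- canonical diagram data
  have hicd' := zOfP_icd (Pset z) h6 hQ
  obtain ⟨hinv', hnofix'⟩ := hicd'
  have hPeq := zOfP_Pset (Pset z) h6 hQ
  have hfix' := zOfP_fixed (Pset z) h6 hQ
  have hgoodσ : ∀ x, x ∉ Pset z → ∀ y, y ∉ Pset z →
      ¬((x < y ∧ y < z.1 x) ∨ (z.1 x < y ∧ y < x)) := by
    intro x hx y hy hc
    have : x ∈ Bad z := mem_Bad.2 ⟨hx, y, hy, hc⟩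
    rw [hfix] at this
    exact absurd this (Finset.notMem_empty x)
  have hgoodτ : ∀ x, x ∉ Pset z → ∀ y, y ∉ Pset z →
      ¬((x < y ∧ y < (zOfP (Pset z) h6 hQ).1 x) ∨ ((zOfP (Pset z) h6 hQ).1 x < y ∧ y < x)) := by
    intro x hx y hy hc
    have : x ∈ Bad (zOfP (Pset z) h6 hQ) := by
      rw [mem_Bad, hPeq]
      exact ⟨hx, y, hy, hc⟩
    rw [hfix'] at this
    exact absurd this (Finset.notMem_empty x)
  have hQclosed : ∀ x, x ∉ Pset z → z.1 x ∉ Pset z := fun x hx => notP_closed hinv hx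
  have hQclosed' : ∀ x, x ∉ Pset z → (zOfP (Pset z) h6 hQ).1 x ∉ Pset z := by
    intro x hx
    have := notP_closed (z := zOfP (Pset z) h6 hQ) hinv' (x := x) (by rw [hPeq]; exact hx)
    rw [hPeq] at this
    exact this
  have hperm : (zOfP (Pset z) h6 hQ).1 = z.1 := by
    apply Equiv.ext
    intro x
    by_cases hx : x ∈ Pset z
    · -- x is one of the six points
      have hx1 : x = (((Pset z).orderIsoOfFin h6) (((Pset z).orderIsoOfFin h6).symm ⟨x, hx⟩)).1 := by
        rw [OrderIso.apply_symm_apply]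
      set i := ((Pset z).orderIsoOfFin h6).symm ⟨x, hx⟩ with hi
      have hc : i = 0 ∨ i = 1 ∨ i = 2 ∨ i = 3 ∨ i = 4 ∨ i = 5 := by
        rcases i with ⟨iv, hiv⟩
        interval_cases iv <;> simp
      have happ : ∀ j : Fin 6, (zOfP (Pset z) h6 hQ).1 (((Pset z).orderIsoOfFin h6) j).1
          = (((Pset z).orderIsoOfFin h6) (j + 3)).1 := by
        intro j
        exact canonF_mono (Pset z) h6 hQ j
      rcases hc with h|h|h|h|h|h <;> rw [h] at hx1 <;> rw [hx1, happ]
      · show (((Pset z).orderIsoOfFin h6) (0+3)).1 = _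
        norm_num [e3, e0]
      · show (((Pset z).orderIsoOfFin h6) (1+3)).1 = _
        norm_num [e4, e1]; exact e4
      · show (((Pset z).orderIsoOfFin h6) (2+3)).1 = _
        norm_num [e5, e2]; exact e5
      · show (((Pset z).orderIsoOfFin h6) (3+3)).1 = _
        have h33 : (3 : Fin 6) + 3 = 0 := by decide
        rw [h33, e0, e3, hinv]
      · show (((Pset z).orderIsoOfFin h6) (4+3)).1 = _
        have h43 : (4 : Fin 6) + 3 = 1 := by decide
        rw [h43, e1, e4, hinv]
      · show (((Pset z).orderIsoOfFin h6) (5+3)).1 = _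
        have h53 : (5 : Fin 6) + 3 = 2 := by decide
        rw [h53, e2, e5, hinv]
    · exact good_unique hinv' hinv hnofix' hnofix hQclosed' hQclosed hgoodτ hgoodσ x hx
  have htri : (zOfP (Pset z) h6 hQ).2 = z.2 := by
    show (_, _, _) = z.2
    rw [e0, e1, e2]
  exact Prod.ext hperm htri

end SignedTri

namespace SignedTri

variable {N : ℕ}

lemma keyOmega2 (A B X S : ℕ) (hAB : A < B) (hXS : X < S)
    (dXA : X≠A) (dXB : X≠B) (dSA : S≠A) (dSB : S≠B) :
    ((A<X ∧ X<B ∧ B<S) ∨ (X<A ∧ A<S ∧ S<B)) ↔ ¬((A<X ∧ X<B) ↔ (A<S ∧ S<B)) := by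
  omega

lemma zmod_cancel : ∀ a b : ZMod 2, a + b = 0 → a = b := by decide

lemma zmod_self : ∀ a : ZMod 2, a + a = 0 := by decide

section ParityComp

variable (P : Finset (Fin N)) (h6 : P.card = 6) {m : ℕ}
  (hQ : (Finset.univ \ P).card = 2*m)

set_option maxHeartbeats 2000000 in
lemma zOfP_parity :
    ((crossNum (canonPerm P h6 hQ) : ZMod 2)) = ((∑ x ∈ P, x.val : ℕ) : ZMod 2) := by
  set τ := canonPerm P h6 hQ with hτdef
  set mo : Fin 6 → Fin N := fun i => ((P.orderIsoOfFin h6) i).1 with hmo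
  set qi : Fin (2*m) → Fin N := fun j => (((Finset.univ \ P).orderIsoOfFin hQ) j).1 with hqi
  have hτm : ∀ i, τ (mo i) = mo (i+3) := fun i => canonF_mono P h6 hQ i
  have hτq : ∀ j, τ (qi j) = qi (flip2 j) := fun j => canonF_q P h6 hQ j
  have hmlt : ∀ i j, mo i < mo j ↔ i < j := fun i j => mono_lt_iff P h6 i j
  have hqlt : ∀ j k, qi j < qi k ↔ j < k := fun j k => qiso_lt_iff P hQ j k
  have hmP : ∀ i, mo i ∈ P := fun i => canonF_mem P h6 i
  have hqP : ∀ j, qi j ∉ P := fun j => canonF_qmem P hQ j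
  have hqm_ne : ∀ j i, qi j ≠ mo i := fun j i h => hqP j (h ▸ hmP i)
  have sumP : ∀ G : Fin N → ZMod 2, ∑ x ∈ P, G x = ∑ i : Fin 6, G (mo i) := by
    intro G
    rw [← Finset.sum_coe_sort P G,
      ← Equiv.sum_comp (P.orderIsoOfFin h6).toEquiv (fun s : {x // x ∈ P} => G s.1)]
    rfl
  have sumQ : ∀ G : Fin N → ZMod 2, ∑ x ∈ Finset.univ \ P, G x = ∑ j : Fin (2*m), G (qi j) := by
    intro G
    rw [← Finset.sum_coe_sort (Finset.univ \ P) G,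
      ← Equiv.sum_comp ((Finset.univ \ P).orderIsoOfFin hQ).toEquiv
        (fun s : {x // x ∈ Finset.univ \ P} => G s.1)]
    rfl
  rw [crossNum_cast]
  have main : (∑ x : Fin N, ∑ y : Fin N, ind τ (x, y))
      = ((∑ j : Fin (2*m), ∑ k : Fin (2*m), ind τ (qi j, qi k))
        + (∑ j : Fin (2*m), ∑ i : Fin 6, ind τ (qi j, mo i)))
        + ((∑ i : Fin 6, ∑ j : Fin (2*m), ind τ (mo i, qi j))
        + (∑ i : Fin 6, ∑ i' : Fin 6, ind τ (mo i, mo i'))) := by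
    rw [← Finset.sum_sdiff (Finset.subset_univ P)]
    congr 1
    · rw [sumQ (fun x => ∑ y : Fin N, ind τ (x, y)), ← Finset.sum_add_distrib]
      refine Finset.sum_congr rfl fun j _ => ?_
      rw [← Finset.sum_sdiff (Finset.subset_univ P)]
      congr 1
      · exact sumQ _
      · exact sumP _
    · rw [sumP (fun x => ∑ y : Fin N, ind τ (x, y)), ← Finset.sum_add_distrib]
      refine Finset.sum_congr rfl fun i _ => ?_
      rw [← Finset.sum_sdiff (Finset.subset_univ P)]
      congr 1
      · exact sumQ _
      · exact sumP _
  rw [main]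
  -- Block QQ = 0
  have hQQ : (∑ j : Fin (2*m), ∑ k : Fin (2*m), ind τ (qi j, qi k)) = 0 := by
    refine Finset.sum_eq_zero fun j _ => Finset.sum_eq_zero fun k _ => ?_
    rw [ind, if_neg]
    rintro ⟨h1, h2, h3, h4⟩
    rw [hτq] at h1 h2
    rw [hqlt] at h1 h2 h3
    have e1 : (flip2 j).val = j.val + 1 := by
      rw [flip2_val]; have := Fin.lt_def.1 h1; rw [flip2_val] at this; split at this <;> split <;> omega
    rw [Cross, hτq, hτq] at h4
    rcases h4 with ⟨-, hb, -⟩ | ⟨hb, -, -⟩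
    · rw [hqlt] at hb
      have := Fin.lt_def.1 hb
      have h3' := Fin.lt_def.1 h3
      omega
    · rw [hqlt] at hb
      have := Fin.lt_def.1 hb
      have h3' := Fin.lt_def.1 h3
      omega
  -- Block PP = 1
  have hPP : (∑ i : Fin 6, ∑ i' : Fin 6, ind τ (mo i, mo i')) = 1 := by
    have ppterm : ∀ i i' : Fin 6, ind τ (mo i, mo i')
        = if (i < i+3 ∧ i' < i'+3 ∧ i < i' ∧
            ((i < i' ∧ i' < i+3 ∧ i+3 < i'+3) ∨ (i' < i ∧ i < i'+3 ∧ i'+3 < i+3)))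
          then (1:ZMod 2) else 0 := by
      intro i i'
      rw [ind]
      refine if_congr ?_ rfl rfl
      rw [Cross]
      simp only [hτm, hmlt]
    simp only [ppterm]
    decide
  -- Mixed blocks
  have hcomm : (∑ j : Fin (2*m), ∑ i : Fin 6, ind τ (qi j, mo i))
      = ∑ i : Fin 6, ∑ j : Fin (2*m), ind τ (qi j, mo i) := Finset.sum_comm
  rw [hQQ, hPP, hcomm]
  have hmix : ∀ i : Fin 6,
      (∑ j : Fin (2*m), ind τ (qi j, mo i)) + (∑ j : Fin (2*m), ind τ (mo i, qi j))
      = if i < i + 3 then (((mo i).val : ZMod 2) + ((mo (i+3)).val : ZMod 2) + 1) else 0 := by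
    intro i
    by_cases hi : i < i + 3
    · -- the real case
      have hi3 : mo i < mo (i+3) := (hmlt _ _).2 hi
      have hiLE : mo i < τ (mo i) := by rw [hτm]; exact hi3
      -- step 1: combined sum equals window count
      have key : (∑ j : Fin (2*m), (ind τ (qi j, mo i) + ind τ (mo i, qi j)
          + (if mo i < qi j ∧ qi j < mo (i+3) then (1:ZMod 2) else 0)))  = 0 := by
        have evencase : ∀ j : Fin (2*m), j.val % 2 = 0 →
            (ind τ (qi j, mo i) + ind τ (mo i, qi j)
              + (if mo i < qi j ∧ qi j < mo (i+3) then (1:ZMod 2) else 0))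
            + (ind τ (qi (flip2 j), mo i) + ind τ (mo i, qi (flip2 j))
              + (if mo i < qi (flip2 j) ∧ qi (flip2 j) < mo (i+3) then (1:ZMod 2) else 0))
            = 0 := by
          intro j hj
          have hfv : (flip2 j).val = j.val + 1 := by rw [flip2_val, if_pos hj]
          have hjlt : j < flip2 j := by rw [Fin.lt_def, hfv]; omega
          have hqjlt : qi j < qi (flip2 j) := (hqlt _ _).2 hjlt
          have hqjLE : qi j < τ (qi j) := by rw [hτq]; exact hqjlt
          have hz1 : ind τ (qi (flip2 j), mo i) = 0 := by
            refine ind_eq_zero₁ ?_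
            show ¬ qi (flip2 j) < τ (qi (flip2 j))
            rw [hτq, flip2_flip2]
            exact not_lt.2 hqjlt.le
          have hz2 : ind τ (mo i, qi (flip2 j)) = 0 := by
            refine ind_eq_zero₂ ?_
            show ¬ qi (flip2 j) < τ (qi (flip2 j))
            rw [hτq, flip2_flip2]
            exact not_lt.2 hqjlt.le
          have hcr : ind τ (qi j, mo i) + ind τ (mo i, qi j)
              = if Cross τ (mo i) (qi j) then (1:ZMod 2) else 0 := by
            rcases lt_or_gt_of_ne (hqm_ne j i) with hlt | hgt
            · rw [ind_eq_zero₃ (q := (mo i, qi j)) (not_lt.2 hlt.le),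
                ind_eq_of_all τ hqjLE hiLE hlt,
                if_congr (cross_symm (σ := τ) (a := qi j) (b := mo i)) rfl rfl]
              ring
            · rw [ind_eq_zero₃ (q := (qi j, mo i)) (not_lt.2 hgt.le),
                ind_eq_of_all τ hiLE hqjLE hgt]
              ring
          have hxor : (if Cross τ (mo i) (qi j) then (1:ZMod 2) else 0)
              = (if mo i < qi j ∧ qi j < mo (i+3) then (1:ZMod 2) else 0)
              + (if mo i < qi (flip2 j) ∧ qi (flip2 j) < mo (i+3) then (1:ZMod 2) else 0) := by
            apply ite_parity1
            rw [Cross, hτm, hτq]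
            simp only [Fin.lt_def]
            exact keyOmega2 ((mo i).val) ((mo (i+3)).val) ((qi j).val) ((qi (flip2 j)).val)
              (Fin.lt_def.1 hi3) (Fin.lt_def.1 hqjlt)
              (fun h => hqm_ne j i (Fin.val_injective h))
              (fun h => hqm_ne j (i+3) (Fin.val_injective h))
              (fun h => hqm_ne (flip2 j) i (Fin.val_injective h))
              (fun h => hqm_ne (flip2 j) (i+3) (Fin.val_injective h))
          rw [hz1, hz2, hcr, hxor]
          have hfin : ∀ a b : ZMod 2, a + b + a + (0 + 0 + b) = 0 := by decide
          exact hfin _ _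
        refine Finset.sum_involution (fun j _ => flip2 j) ?_ ?_ ?_ ?_
        · intro j _
          rcases Nat.even_or_odd j.val with hj | hj
          · exact evencase j (Nat.even_iff.1 hj)
          · rw [Nat.odd_iff] at hj
            have hj' : (flip2 j).val % 2 = 0 := by
              rw [flip2_val, if_neg (by omega)]
              omega
            have := evencase (flip2 j) hj'
            rw [flip2_flip2] at this
            rw [add_comm] at this
            exact this
        · intro j _ _; exact flip2_ne j
        · intro j _; exact Finset.mem_univ _
        · intro j _; exact flip2_flip2 j
      rw [Finset.sum_add_distrib, Finset.sum_add_distrib] at key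
      have hwin := zmod_cancel _ _ key
      rw [if_pos hi, hwin]
      -- now compute the window count
      have hw1 : (∑ j : Fin (2*m), (if mo i < qi j ∧ qi j < mo (i+3) then (1:ZMod 2) else 0))
          = ∑ y ∈ Finset.univ \ P, (if mo i < y ∧ y < mo (i+3) then (1:ZMod 2) else 0) :=
        (sumQ (fun y => if mo i < y ∧ y < mo (i+3) then (1:ZMod 2) else 0)).symm
      rw [hw1, Finset.sum_boole]
      -- card computation
      have hflt : (Finset.univ \ P).filter (fun y => mo i < y ∧ y < mo (i+3))
          = Finset.Ioo (mo i) (mo (i+3)) \ P := by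
        ext y
        simp only [Finset.mem_filter, Finset.mem_sdiff, Finset.mem_Ioo, Finset.mem_univ,
          true_and]
        tauto
      have d1 : ∀ i : Fin 6, i < i + 3 → (i < i+1 ∧ i+1 < i+3 ∧ i < i+2 ∧ i+2 < i+3 ∧ i+1 ≠ i+2 ∧ i+1 < i+2) := by
        decide
      obtain ⟨d11, d12, d13, d14, d15, d16⟩ := d1 i hi
      have hinter : Finset.Ioo (mo i) (mo (i+3)) ∩ P = {mo (i+1), mo (i+2)} := by
        ext y
        simp only [Finset.mem_inter, Finset.mem_Ioo, Finset.mem_insert, Finset.mem_singleton]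
        constructor
        · rintro ⟨⟨hy1, hy2⟩, hyP⟩
          have hy3 : y = mo ((P.orderIsoOfFin h6).symm ⟨y, hyP⟩) := by
            rw [hmo]; simp only; rw [OrderIso.apply_symm_apply]
          set l := (P.orderIsoOfFin h6).symm ⟨y, hyP⟩ with hl
          rw [hy3, hmlt] at hy1 hy2
          have d2 : ∀ i l : Fin 6, i < i + 3 → i < l → l < i+3 → (l = i+1 ∨ l = i+2) := by
            decide
          rcases d2 i l hi hy1 hy2 with h | h
          · left; rw [hy3, h]
          · right; rw [hy3, h]
        · rintro (h | h) <;> rw [h]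
          · exact ⟨⟨(hmlt _ _).2 d11, (hmlt _ _).2 d12⟩, hmP _⟩
          · exact ⟨⟨(hmlt _ _).2 d13, (hmlt _ _).2 d14⟩, hmP _⟩
      have hcard2 : ({mo (i+1), mo (i+2)} : Finset (Fin N)).card = 2 := by
        rw [Finset.card_insert_of_notMem (by
          rw [Finset.mem_singleton]
          intro h
          exact d15 ((OrderIso.injective _) (Subtype.ext h))), Finset.card_singleton]
      have hvals : (mo i).val + 3 ≤ (mo (i+3)).val := by
        have l1 := Fin.lt_def.1 ((hmlt _ _).2 d11)
        have l2 := Fin.lt_def.1 ((hmlt _ _).2 d16)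
        have l3 := Fin.lt_def.1 ((hmlt _ _).2 d14)
        omega
      have hcardIoo : (Finset.Ioo (mo i) (mo (i+3))).card = (mo (i+3)).val - (mo i).val - 1 := by
        rw [Fin.card_Ioo]
      have hcards := Finset.card_sdiff_add_card_inter (Finset.Ioo (mo i) (mo (i+3))) P
      rw [hinter, hcard2, hcardIoo] at hcards
      rw [hflt]
      have hcval : (Finset.Ioo (mo i) (mo (i+3)) \ P).card
          = (mo (i+3)).val - ((mo i).val + 3) := by omega
      rw [hcval, Nat.cast_sub (by omega)]
      push_cast
      have : ∀ a b : ZMod 2, b - (a + 3) = b + a + 1 := by decide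
      rw [this]
      ring
    · -- i.val ≥ 3 : everything vanishes
      rw [if_neg hi]
      have hnle : ¬ mo i < τ (mo i) := by
        rw [hτm]
        intro h
        exact hi ((hmlt _ _).1 h)
      rw [Finset.sum_eq_zero fun j _ => ind_eq_zero₂ (q := (qi j, mo i)) hnle,
        Finset.sum_eq_zero fun j _ => ind_eq_zero₁ (q := (mo i, qi j)) hnle]
      simp
  -- assemble
  have hsplit : (∑ i : Fin 6, ∑ j : Fin (2*m), ind τ (qi j, mo i))
      + (∑ i : Fin 6, ∑ j : Fin (2*m), ind τ (mo i, qi j))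
      = ∑ i : Fin 6, ((∑ j : Fin (2*m), ind τ (qi j, mo i))
        + (∑ j : Fin (2*m), ind τ (mo i, qi j))) := (Finset.sum_add_distrib).symm
  have hfinal : (∑ x ∈ P, x.val : ℕ) = ((∑ i : Fin 6, ((mo i).val : ℕ)) : ℕ) := by
    have := sumP  -- not usable for ℕ; do it again
    rw [← Finset.sum_coe_sort P (fun x => x.val),
      ← Equiv.sum_comp (P.orderIsoOfFin h6).toEquiv (fun s : {x // x ∈ P} => (s.1.val : ℕ))]
    rfl
  rw [hfinal]
  push_cast
  rw [Fin.sum_univ_six (f := fun i => ((mo i).val : ZMod 2))]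
  -- left side: 0 + QP + (PQ + 1)
  have c03 : (0:Fin 6) + 3 = 3 := by decide
  have c13 : (1:Fin 6) + 3 = 4 := by decide
  have c23 : (2:Fin 6) + 3 = 5 := by decide
  have hQP3 : (∑ i : Fin 6, ∑ j : Fin (2*m), ind τ (qi j, mo i))
      + (∑ i : Fin 6, ∑ j : Fin (2*m), ind τ (mo i, qi j))
      = (((mo 0).val : ZMod 2) + ((mo 3).val : ZMod 2) + 1)
        + (((mo 1).val : ZMod 2) + ((mo 4).val : ZMod 2) + 1)
        + (((mo 2).val : ZMod 2) + ((mo 5).val : ZMod 2) + 1) := by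
    rw [hsplit, Fin.sum_univ_six (f := fun i => (∑ j : Fin (2*m), ind τ (qi j, mo i))
        + (∑ j : Fin (2*m), ind τ (mo i, qi j)))]
    rw [hmix 0, hmix 1, hmix 2, hmix 3, hmix 4, hmix 5]
    rw [if_pos (by decide), if_pos (by decide), if_pos (by decide),
      if_neg (by decide), if_neg (by decide), if_neg (by decide)]
    rw [c03, c13, c23]
    ring
  -- combine all
  have harr : ∀ a0 a1 a2 a3 a4 a5 QP PQ : ZMod 2,
      QP + PQ = ((a0 + a3 + 1) + (a1 + a4 + 1) + (a2 + a5 + 1)) →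
      (0 + QP) + (PQ + 1) = a0 + a1 + a2 + a3 + a4 + a5 := by
    decide
  exact harr _ _ _ _ _ _ _ _ hQP3

end ParityComp

end SignedTri

namespace SignedTri

/-- alternating elementary symmetric sums over `range n` -/
def Gs (n k : ℕ) : ℤ := ∑ A ∈ Finset.powersetCard k (Finset.range n), ∏ z ∈ A, (-1:ℤ)^z

lemma Gs_zero (n : ℕ) : Gs n 0 = 1 := by
  rw [Gs, Finset.powersetCard_zero, Finset.sum_singleton, Finset.prod_empty]

lemma Gs_big {n k : ℕ} (h : n < k) : Gs n k = 0 := by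
  rw [Gs, Finset.powersetCard_eq_empty.2 (by rwa [Finset.card_range]), Finset.sum_empty]

lemma Gs_step (n k : ℕ) : Gs (n+1) (k+1) = Gs n (k+1) + (-1:ℤ)^n * Gs n k := by
  rw [Gs, Finset.range_add_one,
    Finset.powersetCard_succ_insert (Finset.notMem_range_self) k]
  rw [Finset.sum_union]
  · congr 1
    rw [Finset.sum_image]
    · rw [Gs, Finset.mul_sum]
      refine Finset.sum_congr rfl fun A hA => ?_
      rw [Finset.mem_powersetCard] at hA
      have hnA : n ∉ A := fun hc => Finset.notMem_range_self (hA.1 hc)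
      rw [Finset.prod_insert hnA]
    · intro A hA B hB hab
      rw [Finset.mem_coe, Finset.mem_powersetCard] at hA hB
      have hnA : n ∉ A := fun hc => Finset.notMem_range_self (hA.1 hc)
      have hnB : n ∉ B := fun hc => Finset.notMem_range_self (hB.1 hc)
      have := congrArg (fun s => Finset.erase s n) hab
      simpa [Finset.erase_insert hnA, Finset.erase_insert hnB] using this
  · rw [Finset.disjoint_left]
    intro A hA hA2
    rw [Finset.mem_powersetCard] at hA
    rw [Finset.mem_image] at hA2
    obtain ⟨B, -, hB⟩ := hA2
    exact Finset.notMem_range_self (hA.1 (by rw [← hB]; exact Finset.mem_insert_self _ _))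

lemma neg_one_pow_two_mul (p : ℕ) : ((-1:ℤ))^(2*p) = 1 := by
  rw [pow_mul]; norm_num

lemma Gs_claims (p : ℕ) :
    Gs (2*p) 1 = 0 ∧ Gs (2*p) 2 = -(p:ℤ) ∧ Gs (2*p) 3 = 0 ∧
    Gs (2*p) 4 = (p.choose 2 : ℤ) ∧ Gs (2*p) 5 = 0 ∧ Gs (2*p) 6 = -(p.choose 3 : ℤ) := by
  induction p with
  | zero =>
    refine ⟨Gs_big (by norm_num), ?_, Gs_big (by norm_num), ?_, Gs_big (by norm_num), ?_⟩
    · rw [Gs_big (by norm_num)]; norm_num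
    · rw [Gs_big (by norm_num)]; norm_num
    · rw [Gs_big (by norm_num)]; norm_num
  | succ p ih =>
    obtain ⟨g1, g2, g3, g4, g5, g6⟩ := ih
    have g0 := Gs_zero (2*p)
    have heven : ((-1:ℤ))^(2*p) = 1 := neg_one_pow_two_mul p
    have hodd : ((-1:ℤ))^(2*p+1) = -1 := by rw [pow_succ, heven]; ring
    have o1 : Gs (2*p+1) 1 = Gs (2*p) 1 + Gs (2*p) 0 := by
      have := Gs_step (2*p) 0; rwa [heven, one_mul] at this
    have o2 : Gs (2*p+1) 2 = Gs (2*p) 2 + Gs (2*p) 1 := by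
      have := Gs_step (2*p) 1; rwa [heven, one_mul] at this
    have o3 : Gs (2*p+1) 3 = Gs (2*p) 3 + Gs (2*p) 2 := by
      have := Gs_step (2*p) 2; rwa [heven, one_mul] at this
    have o4 : Gs (2*p+1) 4 = Gs (2*p) 4 + Gs (2*p) 3 := by
      have := Gs_step (2*p) 3; rwa [heven, one_mul] at this
    have o5 : Gs (2*p+1) 5 = Gs (2*p) 5 + Gs (2*p) 4 := by
      have := Gs_step (2*p) 4; rwa [heven, one_mul] at this
    have o6 : Gs (2*p+1) 6 = Gs (2*p) 6 + Gs (2*p) 5 := by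
      have := Gs_step (2*p) 5; rwa [heven, one_mul] at this
    have o0 : Gs (2*p+1) 0 = 1 := Gs_zero _
    have htwo : 2*(p+1) = (2*p+1)+1 := by ring
    have e1 : Gs (2*(p+1)) 1 = Gs (2*p+1) 1 - Gs (2*p+1) 0 := by
      rw [htwo]; have := Gs_step (2*p+1) 0; rw [hodd] at this; linarith
    have e2 : Gs (2*(p+1)) 2 = Gs (2*p+1) 2 - Gs (2*p+1) 1 := by
      rw [htwo]; have := Gs_step (2*p+1) 1; rw [hodd] at this; linarith
    have e3 : Gs (2*(p+1)) 3 = Gs (2*p+1) 3 - Gs (2*p+1) 2 := by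
      rw [htwo]; have := Gs_step (2*p+1) 2; rw [hodd] at this; linarith
    have e4 : Gs (2*(p+1)) 4 = Gs (2*p+1) 4 - Gs (2*p+1) 3 := by
      rw [htwo]; have := Gs_step (2*p+1) 3; rw [hodd] at this; linarith
    have e5 : Gs (2*(p+1)) 5 = Gs (2*p+1) 5 - Gs (2*p+1) 4 := by
      rw [htwo]; have := Gs_step (2*p+1) 4; rw [hodd] at this; linarith
    have e6 : Gs (2*(p+1)) 6 = Gs (2*p+1) 6 - Gs (2*p+1) 5 := by
      rw [htwo]; have := Gs_step (2*p+1) 5; rw [hodd] at this; linarith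
    have c2 : ((p+1).choose 2 : ℤ) = (p.choose 2 : ℤ) + p := by
      have : (p+1).choose 2 = p.choose 1 + p.choose 2 := Nat.choose_succ_succ p 1
      rw [this, Nat.choose_one_right]; push_cast; ring
    have c3 : ((p+1).choose 3 : ℤ) = (p.choose 3 : ℤ) + (p.choose 2 : ℤ) := by
      have : (p+1).choose 3 = p.choose 2 + p.choose 3 := Nat.choose_succ_succ p 2
      rw [this]; push_cast; ring
    refine ⟨?_, ?_, ?_, ?_, ?_, ?_⟩
    · rw [e1, o1, o0, g1, g0]; ring
    · rw [e2, o2, o1, g2, g1, g0]; push_cast; ring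
    · rw [e3, o3, o2, g3, g2, g1]; ring
    · rw [e4, o4, o3, g4, g3, g2, c2]; ring
    · rw [e5, o5, o4, g5, g4, g3]; ring
    · rw [e6, o6, o5, g6, g5, g4, c3]; ring

lemma L3 (p : ℕ) :
    (∑ A ∈ Finset.powersetCard 6 (Finset.univ : Finset (Fin (2*p))),
      (-1:ℤ) ^ (∑ x ∈ A, x.val)) = -(p.choose 3 : ℤ) := by
  have h1 : (Finset.univ : Finset (Fin (2*p))).map Fin.valEmbedding = Finset.range (2*p) := by
    rw [Fin.map_valEmbedding_univ, Nat.Iio_eq_range]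
  have h2 := Gs_claims p
  rw [← h2.2.2.2.2.2, Gs, ← h1, Finset.powersetCard_map, Finset.sum_map]
  refine Finset.sum_congr rfl fun A _ => ?_
  rw [show (Finset.mapEmbedding Fin.valEmbedding).toEmbedding A = A.map Fin.valEmbedding from rfl,
    Finset.prod_map, ← Finset.prod_pow_eq_pow_sum]
  rfl

end SignedTri

namespace SignedTri

variable {N : ℕ}

lemma card_Pset {z : Equiv.Perm (Fin N) × Tri N} (htc : TriCond z.1 z.2) :
    (Pset z).card = 6 := by
  have pat := pattern htc
  simp only [Fin.lt_def] at pat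
  obtain ⟨p1, p2, p3, p4, p5⟩ := pat
  have ne1 : ∀ {a b : Fin N}, a.val < b.val → a ≠ b :=
    fun h he => by rw [he] at h; exact lt_irrefl _ h
  rw [Pset]
  rw [Finset.card_insert_of_notMem (by
      simp only [Finset.mem_insert, Finset.mem_singleton]
      push_neg
      exact ⟨ne1 p1, ne1 (p1.trans p2), ne1 ((p1.trans p2).trans p3),
        ne1 (((p1.trans p2).trans p3).trans p4),
        ne1 ((((p1.trans p2).trans p3).trans p4).trans p5)⟩),
    Finset.card_insert_of_notMem (by
      simp only [Finset.mem_insert, Finset.mem_singleton]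
      push_neg
      exact ⟨ne1 p2, ne1 (p2.trans p3), ne1 ((p2.trans p3).trans p4),
        ne1 (((p2.trans p3).trans p4).trans p5)⟩),
    Finset.card_insert_of_notMem (by
      simp only [Finset.mem_insert, Finset.mem_singleton]
      push_neg
      exact ⟨ne1 p3, ne1 (p3.trans p4), ne1 ((p3.trans p4).trans p5)⟩),
    Finset.card_insert_of_notMem (by
      simp only [Finset.mem_insert, Finset.mem_singleton]
      push_neg
      exact ⟨ne1 p4, ne1 (p4.trans p5)⟩),
    Finset.card_insert_of_notMem (by
      simp only [Finset.mem_singleton]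
      exact ne1 p5),
    Finset.card_singleton]

end SignedTri

open SignedTri in
theorem signed_triangles' (p : ℕ) :
    (∑ σ ∈ chordDiagrams p, (-1 : ℤ) ^ crossNum σ * triNum σ) = -(p.choose 3 : ℤ) := by
  classical
  -- Step 1 : rewrite as a sum over marked pairs
  have step1 : (∑ σ ∈ chordDiagrams p, (-1 : ℤ) ^ crossNum σ * triNum σ)
      = ∑ z ∈ pairSet (2*p), (-1 : ℤ) ^ crossNum z.1 := by
    rw [pairSet, Finset.sum_filter, Fintype.sum_prod_type, chordDiagrams, Finset.sum_filter]
    refine Finset.sum_congr rfl fun σ _ => ?_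
    by_cases hσ : IsChordDiagram σ
    · rw [if_pos hσ]
      have htn : ((triNum σ : ℤ)) = ∑ t : Tri (2*p), if TriCond σ t then (1:ℤ) else 0 := by
        rw [triNum, Finset.card_filter, Nat.cast_sum]
        refine Finset.sum_congr rfl fun t _ => ?_
        rw [Nat.cast_ite]
        exact if_congr (by simp only [TriCond]) rfl rfl
      rw [htn, Finset.mul_sum]
      refine Finset.sum_congr rfl fun t _ => ?_
      rw [mul_ite, mul_one, mul_zero]
      by_cases ht : TriCond σ t
      · rw [if_pos ht, if_pos ⟨hσ, ht⟩]
      · rw [if_neg ht, if_neg (fun hc => ht hc.2)]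
    · rw [if_neg hσ]
      rw [Finset.sum_eq_zero fun t _ => if_neg (fun hc => hσ hc.1)]
  rw [step1]
  rw [← Finset.sum_filter_add_sum_filter_not (pairSet (2*p)) (fun z => (Bad z).Nonempty)]
  rw [sum_Mov, zero_add]
  -- small p case
  by_cases hp : p < 3
  · have hps : (pairSet (2*p)).filter (fun z => ¬(Bad z).Nonempty) = ∅ := by
      rw [Finset.eq_empty_iff_forall_notMem]
      intro z hz
      rw [Finset.mem_filter] at hz
      simp only [pairSet, Finset.mem_filter] at hz
      have htc := hz.1.2.2
      have pat := pattern htc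
      simp only [Fin.lt_def] at pat
      have h6 := (z.1 z.2.2.2).2
      omega
    rw [hps, Finset.sum_empty, Nat.choose_eq_zero_of_lt (by omega)]
    norm_num
  · push_neg at hp
    -- bijection with 6-subsets
    have hj6 : ∀ A ∈ Finset.powersetCard 6 (Finset.univ : Finset (Fin (2*p))),
        A.card = 6 ∧ (Finset.univ \ A).card = 2*(p-3) := by
      intro A hA
      rw [Finset.mem_powersetCard_univ] at hA
      refine ⟨hA, ?_⟩
      rw [Finset.card_sdiff_of_subset (Finset.subset_univ A), hA]
      simp only [Finset.card_univ, Fintype.card_fin]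
      omega
    set jf : Finset (Fin (2*p)) → Equiv.Perm (Fin (2*p)) × Tri (2*p) := fun A =>
      if h : A.card = 6 ∧ (Finset.univ \ A).card = 2*(p-3) then zOfP A h.1 h.2
      else (1, (⟨0, by omega⟩, ⟨0, by omega⟩, ⟨0, by omega⟩)) with hjf
    have hjf_eval : ∀ (A : Finset (Fin (2*p))) (h1 : A.card = 6)
        (h2 : (Finset.univ \ A).card = 2*(p-3)), jf A = zOfP A h1 h2 := by
      intro A h1 h2
      rw [hjf]
      exact dif_pos ⟨h1, h2⟩
    rw [Finset.sum_nbij' (i := fun z => Pset z) (j := jf)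
      (t := Finset.powersetCard 6 (Finset.univ : Finset (Fin (2*p))))
      (g := fun A => (-1 : ℤ) ^ (∑ x ∈ A, x.val))
      ?hi ?hj ?hji ?hij ?hfg]
    · exact L3 p
    case hi =>
      intro z hz
      rw [Finset.mem_filter] at hz
      simp only [pairSet, Finset.mem_filter] at hz
      rw [Finset.mem_powersetCard_univ]
      exact card_Pset hz.1.2.2
    case hj =>
      intro A hA
      obtain ⟨h1, h2⟩ := hj6 A hA
      rw [hjf_eval A h1 h2, Finset.mem_filter]
      constructor
      · simp only [pairSet, Finset.mem_filter]
        exact ⟨Finset.mem_univ _, zOfP_icd A h1 h2, zOfP_tri A h1 h2⟩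
      · rw [zOfP_fixed A h1 h2]
        simp
    case hji =>
      intro z hz
      rw [Finset.mem_filter] at hz
      simp only [pairSet, Finset.mem_filter] at hz
      have hicd := hz.1.2.1
      have htc := hz.1.2.2
      have hfix : Bad z = ∅ := Finset.not_nonempty_iff_eq_empty.1 hz.2
      have h1 : (Pset z).card = 6 := card_Pset htc
      have h2 : (Finset.univ \ Pset z).card = 2*(p-3) := by
        rw [Finset.card_sdiff_of_subset (Finset.subset_univ _), h1]
        simp only [Finset.card_univ, Fintype.card_fin]
        omega
      rw [hjf_eval _ h1 h2]
      exact fixed_eq_zOfP hicd htc hfix h1 h2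
    case hij =>
      intro A hA
      obtain ⟨h1, h2⟩ := hj6 A hA
      rw [hjf_eval A h1 h2]
      exact zOfP_Pset A h1 h2
    case hfg =>
      intro z hz
      rw [Finset.mem_filter] at hz
      simp only [pairSet, Finset.mem_filter] at hz
      have hicd := hz.1.2.1
      have htc := hz.1.2.2
      have hfix : Bad z = ∅ := Finset.not_nonempty_iff_eq_empty.1 hz.2
      have h1 : (Pset z).card = 6 := card_Pset htc
      have h2 : (Finset.univ \ Pset z).card = 2*(p-3) := by
        rw [Finset.card_sdiff_of_subset (Finset.subset_univ _), h1]
        simp only [Finset.card_univ, Fintype.card_fin]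
        omega
      have heq := fixed_eq_zOfP hicd htc hfix h1 h2
      have hz1 : canonPerm (Pset z) h1 h2 = z.1 := congrArg Prod.fst heq
      rw [← hz1]
      exact pow_eq_of_parity (zOfP_parity (Pset z) h1 h2)


/-- The signed triangle count over all chord diagrams with `p` chords. -/
theorem signed_triangles (p : ℕ) :
    (∑ σ ∈ chordDiagrams p, (-1 : ℤ) ^ crossNum σ * triNum σ) = -(p.choose 3 : ℤ) := by
  exact signed_triangles' p
end
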